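/- arXiv:math/0612015 — 11 statements merged into one kernel-verified Lean document; each statement's English description precedes it below -/
import Mathlib

section
/- The operator A associated with a closed positive form t with lower bound γ > 0 coincides with B⁻¹, where B is the bounded operator defined by (v,x) = t(Bv,x); in particular A is a positive self-adjoint operator from X to X* with (Ax,x) ≥ γ‖x‖² for all x ∈ dom A. -/
open scoped ComplexConjugate ComplexOrder InnerProductSpace
noncomputable section

/-- The conjugate dual of a complex normed space: continuous conjugate-linear
functionals. Pairing `(v, x) := v x`. -/
abbrev CDual (X : Type*) [NormedAddCommGroup X] [NormedSpace ℂ X] :=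
  X →SL[starRingEnd ℂ] ℂ


/-- A densely defined operator `A : X → X*` is self-adjoint (`A = A*`):
it is densely defined, symmetric (`(Ax,y) = (x,Ay)` i.e. `A ⊆ A*`), and maximal
(any `y` for which `x ↦ (Ax,y)` is represented by some `w ∈ X*` lies in `dom A`
with `Ay = w`, i.e. `A* ⊆ A`). -/
def IsSelfAdjointOp {X : Type*} [NormedAddCommGroup X] [NormedSpace ℂ X]
    (A : X →ₗ.[ℂ] CDual X) : Prop :=
  Dense (A.domain : Set X) ∧
  (∀ x y : A.domain, A x (y : X) = starRingEnd ℂ (A y (x : X))) ∧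
  (∀ (y : X) (w : CDual X),
    (∀ x : A.domain, A x y = starRingEnd ℂ (w (x : X))) →
      ∃ hy : y ∈ A.domain, A ⟨y, hy⟩ = w)

/-- `(Ax, x) ≥ 0` for all `x ∈ dom A` (using the complex order). -/
def IsPositiveOp {X : Type*} [NormedAddCommGroup X] [NormedSpace ℂ X]
    (A : X →ₗ.[ℂ] CDual X) : Prop :=
  ∀ x : A.domain, 0 ≤ A x (x : X)


/-- Complex conjugation as a continuous conjugate-linear map. -/
def conjLM : ℂ →ₛₗ[starRingEnd ℂ] ℂ where
  toFun := starRingEnd ℂ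
  map_add' := by simp
  map_smul' a x := by simp [smul_eq_mul]

def conjSL : ℂ →SL[starRingEnd ℂ] ℂ := ⟨conjLM, Complex.continuous_conj⟩

/-- Conjugate-linear functionals separate points. -/
theorem cdual_separates {X : Type*} [NormedAddCommGroup X] [NormedSpace ℂ X]
    {z : X} (h : ∀ v : CDual X, v z = 0) : z = 0 := by
  by_contra hz
  obtain ⟨f, hf1, hfz⟩ := exists_dual_vector ℂ z (norm_ne_zero_iff.mpr hz)
  have h0 : starRingEnd ℂ (f z) = 0 := h (conjSL.comp f)
  rw [hfz] at h0
  simp only [RCLike.conj_ofReal, Complex.conj_ofReal] at h0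
  exact hz (norm_eq_zero.mp (by simpa using h0))


/-- Setting of Statements 0-1: H = (D,t) is the Hilbert space of the
closed positive form t with lower bound gamma > 0, embedded in X via iota, and
B : X* -> H is the bounded Riesz-representation operator of Statement 1.  A is the
operator associated to the form: dom A consists of those x = iota hx for which the
functional y |-> t(x,y) is represented by some z in X* (i.e. inner y hx = z (iota y)
for all y in H), and then A x = z.  Conclusion: A coincides with the inverse of
(iota ∘ B); in particular A is a positive self-adjoint operator from X to X* with
(Ax, x) >= gamma * norm x ^ 2 on its domain. -/

theorem statement5
    {X : Type*} [NormedAddCommGroup X] [NormedSpace ℂ X] [CompleteSpace X]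
    {H : Type*} [NormedAddCommGroup H] [InnerProductSpace ℂ H] [CompleteSpace H]
    (ι : H →ₗ[ℂ] X) (hinj : Function.Injective ι) (hdense : DenseRange ι)
    (γ : ℝ) (hγ : 0 < γ) (hlb : ∀ x : H, γ * ‖ι x‖ ^ 2 ≤ ‖x‖ ^ 2)
    (B : CDual X →L[ℂ] H)
    (hB : ∀ (v : CDual X) (x : H), v (ι x) = ⟪x, B v⟫_ℂ)
    (A : X →ₗ.[ℂ] CDual X)
    (hAdom : ∀ x : X, x ∈ A.domain ↔
      ∃ (hx : H) (z : CDual X), ι hx = x ∧ ∀ y : H, ⟪y, hx⟫_ℂ = z (ι y))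
    (hAval : ∀ (x : A.domain) (hx : H), ι hx = (x : X) →
      ∀ y : H, ⟪y, hx⟫_ℂ = A x (ι y)) :
    ((A.domain : Set X) = Set.range (fun v : CDual X => ι (B v))) ∧
    (∀ v : CDual X, ∃ h : ι (B v) ∈ A.domain, A ⟨ι (B v), h⟩ = v) ∧
    IsSelfAdjointOp A ∧ IsPositiveOp A ∧
    (∀ x : A.domain, (↑(γ * ‖(x : X)‖ ^ 2) : ℂ) ≤ A x (x : X)) := by
  -- continuity of ι
  have hιbound : ∀ x : H, ‖ι x‖ ≤ (Real.sqrt γ)⁻¹ * ‖x‖ := by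
    intro x
    have h1 : 0 < Real.sqrt γ := Real.sqrt_pos.mpr hγ
    have h2 : Real.sqrt γ ^ 2 = γ := Real.sq_sqrt hγ.le
    have h4 : Real.sqrt (γ * ‖ι x‖ ^ 2) ≤ Real.sqrt (‖x‖ ^ 2) := Real.sqrt_le_sqrt (hlb x)
    rw [Real.sqrt_mul hγ.le, Real.sqrt_sq (norm_nonneg _), Real.sqrt_sq (norm_nonneg _)] at h4
    calc ‖ι x‖ = (Real.sqrt γ)⁻¹ * (Real.sqrt γ * ‖ι x‖) := by field_simp
      _ ≤ (Real.sqrt γ)⁻¹ * ‖x‖ := by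
          exact mul_le_mul_of_nonneg_left h4 (inv_nonneg.mpr h1.le)
  have hιcont : Continuous ι := AddMonoidHomClass.continuous_of_bound ι _ hιbound
  -- membership of ι (B v) in the domain
  have hmem : ∀ v : CDual X, ι (B v) ∈ A.domain := fun v =>
    (hAdom _).mpr ⟨B v, v, rfl, fun y => (hB v y).symm⟩
  -- A (ι (B v)) = v
  have hval : ∀ (v : CDual X) (h : ι (B v) ∈ A.domain), A ⟨ι (B v), h⟩ = v := by
    intro v h
    have key := hAval ⟨ι (B v), h⟩ (B v) rfl
    have : ⇑(A ⟨ι (B v), h⟩) = ⇑v := by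
      apply hdense.equalizer (ContinuousLinearMap.continuous _) v.continuous
      funext y
      simp only [Function.comp_apply]
      rw [← key y, hB v y]
    exact ContinuousLinearMap.ext fun y => congrFun this y
  -- every element of the domain is of the form ι (B v) with A x = v
  have hrep : ∀ x : A.domain, ∃ hx : H, ι hx = (x : X) ∧
      ∀ y : H, ⟪y, hx⟫_ℂ = A x (ι y) := by
    intro x
    obtain ⟨hx, z, hι, _⟩ := (hAdom (x : X)).mp x.2
    exact ⟨hx, hι, hAval x hx hι⟩
  have hdom_eq : (A.domain : Set X) = Set.range (fun v : CDual X => ι (B v)) := by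
    ext x
    constructor
    · intro hx
      obtain ⟨h, z, hι, hz⟩ := (hAdom x).mp hx
      have : h = B z := ext_inner_left ℂ fun y => by rw [hz y, hB z y]
      exact ⟨z, by show ι (B z) = x; rw [← this, hι]⟩
    · rintro ⟨v, rfl⟩
      exact hmem v
  refine ⟨hdom_eq, fun v => ⟨hmem v, hval v (hmem v)⟩, ?_, ?_, ?_⟩
  · -- self-adjointness
    refine ⟨?_, ?_, ?_⟩
    · -- density
      have hBd : DenseRange B := by
        have hbot : (LinearMap.range (B : CDual X →ₗ[ℂ] H))ᗮ = ⊥ := by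
          rw [Submodule.eq_bot_iff]
          intro h hh
          have hz : ∀ v : CDual X, v (ι h) = 0 := by
            intro v
            rw [hB v h]
            exact (inner_eq_zero_symm.mpr (hh (B v) ⟨v, rfl⟩))
          exact hinj (by rw [cdual_separates hz]; simp)
        have htop : (LinearMap.range (B : CDual X →ₗ[ℂ] H)).topologicalClosure = ⊤ :=
          Submodule.topologicalClosure_eq_top_iff.mpr hbot
        have hd : Dense ((LinearMap.range (B : CDual X →ₗ[ℂ] H) : Submodule ℂ H) : Set H) :=
          Submodule.dense_iff_topologicalClosure_eq_top.mpr htop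
        simpa [DenseRange, LinearMap.coe_range] using hd
      have : DenseRange (fun v : CDual X => ι (B v)) :=
        DenseRange.comp hdense hBd hιcont
      rw [hdom_eq]
      exact this
    · -- symmetry
      intro x y
      obtain ⟨hx, hιx, hx'⟩ := hrep x
      obtain ⟨hy, hιy, hy'⟩ := hrep y
      rw [← hιy, ← hx' hy, ← hιx, ← hy' hx, inner_conj_symm]
    · -- maximality
      intro y w hyw
      have hy : y = ι (B w) := by
        have : ∀ v : CDual X, v (y - ι (B w)) = 0 := by
          intro v
          have h1 : v y = starRingEnd ℂ (w (ι (B v))) := by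
            have := hyw ⟨ι (B v), hmem v⟩
            rwa [hval v (hmem v)] at this
          have h2 : w (ι (B v)) = ⟪B v, B w⟫_ℂ := hB w (B v)
          have h3 : v (ι (B w)) = ⟪B w, B v⟫_ℂ := hB v (B w)
          rw [map_sub, h1, h2, h3, inner_conj_symm, sub_self]
        exact sub_eq_zero.mp (cdual_separates this)
      subst hy
      exact ⟨hmem w, hval w (hmem w)⟩
  · -- positivity
    intro x
    obtain ⟨hx, hιx, hx'⟩ := hrep x
    have h2 : A x (x : X) = (‖hx‖ : ℂ) ^ 2 := by
      rw [← hιx, ← hx' hx, inner_self_eq_norm_sq_to_K]; norm_cast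
    rw [h2, ← Complex.ofReal_pow]
    exact_mod_cast Complex.real_le_real.mpr (by positivity)
  · -- lower bound
    intro x
    obtain ⟨hx, hιx, hx'⟩ := hrep x
    have hA : A x (x : X) = (‖hx‖ : ℂ) ^ 2 := by
      rw [← hιx, ← hx' hx, inner_self_eq_norm_sq_to_K]; norm_cast
    rw [hA]
    have h1 : γ * ‖(x : X)‖ ^ 2 ≤ ‖hx‖ ^ 2 := by rw [← hιx]; exact hlb hx
    rw [← Complex.ofReal_pow]
    exact_mod_cast Complex.real_le_real.mpr h1
end
end

section
/- Every densely defined positive operator a : X → X* with positive lower bound γ admits a positive self-adjoint extension A_F (the Friedrichs extension) satisfying (A_F x, x) ≥ γ‖x‖² for all x ∈ dom A_F. -/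
open scoped ComplexConjugate ComplexOrder InnerProductSpace
noncomputable section

/-!
The form `t(x, y) = (a y, x)` is a Hermitian inner product on `dom a` (polarization, since
`(a x, x)` is real) dominating `γ ‖x‖²`, so its completion `H` embeds continuously and injectively
into `X` by some `J`. The Friedrichs extension is the operator whose graph consists of the pairs
`(J h, w)` with `w (J z) = ⟪z, h⟫` for all `z ∈ H`. It extends `a` and is symmetric by
construction, inherits the lower bound from `γ ‖J h‖² ≤ ‖h‖²`, and is maximal because the Riesz
representation on `H` puts every `w ∈ X*` in its range.
-/

universe u

def IsCoerciveOp {X : Type*} [NormedAddCommGroup X] [NormedSpace ℂ X]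
    (A : X →ₗ.[ℂ] CDual X) (γ : ℝ) : Prop :=
  ∀ x : A.domain, (↑(γ * ‖(x : X)‖ ^ 2) : ℂ) ≤ A x (x : X)

theorem le_inv_sqrt_mul_of_mul_sq_le {γ s t : ℝ} (hγ : 0 < γ) (hs : 0 ≤ s) (ht : 0 ≤ t)
    (h : γ * s ^ 2 ≤ t ^ 2) : s ≤ (√γ)⁻¹ * t := by
  rw [inv_mul_eq_div, le_div_iff₀' (Real.sqrt_pos.2 hγ)]
  have := Real.sqrt_le_sqrt h
  rwa [Real.sqrt_mul hγ.le, Real.sqrt_sq hs, Real.sqrt_sq ht] at this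

section ConjugateDual

variable {X : Type*} [NormedAddCommGroup X] [NormedSpace ℂ X]

theorem eq_zero_of_forall_cdual_eq_zero {v : X} (hv : ∀ w : CDual X, w v = 0) : v = 0 :=
  SeparatingDual.eq_zero_of_forall_dual_eq_zero fun f => by
    simpa using hv ((starL ℂ).toContinuousLinearMap.comp f)

theorem exists_inner_eq_of_conjLinear {H : Type*} [NormedAddCommGroup H]
    [InnerProductSpace ℂ H] [CompleteSpace H] (f : H →L⋆[ℂ] ℂ) :
    ∃ h : H, ∀ z, f z = ⟪z, h⟫_ℂ :=
  ⟨(InnerProductSpace.toDual ℂ H).symm ((starL ℂ).toContinuousLinearMap.comp f), fun z => by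
    rw [← inner_conj_symm, InnerProductSpace.toDual_symm_apply]
    simp⟩

end ConjugateDual

section Form

variable {X : Type*} [NormedAddCommGroup X] [NormedSpace ℂ X] {a : X →ₗ.[ℂ] CDual X}

theorem apply_add_smul_self (x y : a.domain) (c : ℂ) :
    a (x + c • y) ((x + c • y : a.domain) : X)
      = a x x + conj c * a x y + c * a y x + c * conj c * a y y := by
  simp only [a.map_add, a.map_smul, Submodule.coe_add, Submodule.coe_smul, add_apply, smul_apply,
    map_add, map_smulₛₗ, smul_eq_mul]
  ring

theorem apply_eq_conj_apply_of_forall_im_eq_zero (him : ∀ z : a.domain, (a z z).im = 0)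
    (x y : a.domain) : a x y = conj (a y x) := by
  have hx := him x
  have hy := him y
  have hone := him (x + (1 : ℂ) • y)
  have hI := him (x + Complex.I • y)
  rw [apply_add_smul_self] at hone hI
  simp only [map_one, one_mul, mul_one, Complex.add_im] at hone
  simp only [Complex.conj_I, Complex.add_im, Complex.mul_im, Complex.I_re, Complex.I_im,
    Complex.neg_im, Complex.neg_re, Complex.mul_re] at hI
  apply Complex.ext
  · simp only [Complex.conj_re]; linarith
  · simp only [Complex.conj_im]; linarith

variable {γ : ℝ}

theorem IsCoerciveOp.im_eq_zero (ha : IsCoerciveOp a γ) (x : a.domain) : (a x x).im = 0 := by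
  have h := (Complex.le_def.1 (ha x)).2
  rw [Complex.ofReal_im] at h
  exact h.symm

theorem IsCoerciveOp.le_re (ha : IsCoerciveOp a γ) (x : a.domain) :
    γ * ‖(x : X)‖ ^ 2 ≤ (a x x).re := by
  have h := (Complex.le_def.1 (ha x)).1
  rwa [Complex.ofReal_re] at h

theorem IsCoerciveOp.isPositiveOp (ha : IsCoerciveOp a γ) (hγ : 0 ≤ γ) : IsPositiveOp a :=
  fun x => le_trans (Complex.zero_le_real.2 (by positivity)) (ha x)

end Form

section EnergySpace

variable {X : Type*} [NormedAddCommGroup X] [NormedSpace ℂ X]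

/-- `dom a`, to be equipped with the inner product `⟪x, y⟫ = (a y, x)`. -/
def EnergySpace (a : X →ₗ.[ℂ] CDual X) : Type _ := a.domain

variable (a : X →ₗ.[ℂ] CDual X)

instance : AddCommGroup (EnergySpace a) := inferInstanceAs (AddCommGroup a.domain)

instance : Module ℂ (EnergySpace a) := inferInstanceAs (Module ℂ a.domain)

def EnergySpace.toDomain : EnergySpace a ≃ₗ[ℂ] a.domain := LinearEquiv.refl ℂ a.domain

open EnergySpace in
abbrev EnergySpace.innerCore {γ : ℝ} (hγ : 0 < γ) (ha : IsCoerciveOp a γ) :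
    InnerProductSpace.Core ℂ (EnergySpace a) where
  inner x y := a (toDomain a y) (toDomain a x : X)
  conj_inner_symm x y :=
    (apply_eq_conj_apply_of_forall_im_eq_zero ha.im_eq_zero (toDomain a y) (toDomain a x)).symm
  re_inner_nonneg x := le_trans (by positivity) (ha.le_re (toDomain a x))
  definite x hx := by
    have hle := ha.le_re (toDomain a x)
    rw [hx, Complex.zero_re] at hle
    have : ‖(toDomain a x : X)‖ ^ 2 = 0 := by nlinarith [sq_nonneg ‖(toDomain a x : X)‖]
    exact (toDomain a).injective (Subtype.ext (by simpa using this))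
  add_left x y z := by simp [map_add]
  smul_left x y r := by simp [map_smulₛₗ]

end EnergySpace

section Completion

open UniformSpace

variable {X : Type*} [NormedAddCommGroup X] [NormedSpace ℂ X] [CompleteSpace X]
  {E : Type*} [NormedAddCommGroup E] [InnerProductSpace ℂ E] (ι : E →L[ℂ] X)

def completionExtension : Completion E →L[ℂ] X := ι.extend Completion.toComplL

@[simp]
theorem completionExtension_coe (e : E) : completionExtension ι e = ι e :=
  ι.extend_eq Completion.denseRange_coe (Completion.isUniformInducing_coe E) e

variable {ι}

theorem mul_norm_completionExtension_sq_le {γ : ℝ} (hι : ∀ e, γ * ‖ι e‖ ^ 2 ≤ ‖e‖ ^ 2)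
    (z : Completion E) : γ * ‖completionExtension ι z‖ ^ 2 ≤ ‖z‖ ^ 2 := by
  refine Completion.induction_on z (isClosed_le (by fun_prop) (by fun_prop)) fun e => ?_
  simpa using hι e

theorem apply_completionExtension_eq_inner {w : CDual X} {e : E}
    (hw : ∀ z, w (ι z) = ⟪z, e⟫_ℂ) (z : Completion E) :
    w (completionExtension ι z) = ⟪z, (e : Completion E)⟫_ℂ := by
  refine Completion.induction_on z
    (isClosed_eq (by fun_prop) (continuous_id.inner continuous_const)) fun z => ?_
  simpa using hw z

theorem completionExtension_injective (hι : ∀ e : E, ∃ w : CDual X, ∀ z, w (ι z) = ⟪z, e⟫_ℂ) :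
    Function.Injective (completionExtension ι) := by
  refine (injective_iff_map_eq_zero _).2 fun z hz => ?_
  refine Completion.denseRange_coe.eq_zero_of_inner_left ℂ fun e => ?_
  obtain ⟨w, hw⟩ := hι e
  rw [← apply_completionExtension_eq_inner hw, hz, map_zero]

end Completion

section FriedrichsOperator

variable {X : Type*} [NormedAddCommGroup X] [NormedSpace ℂ X]
  {H : Type*} [NormedAddCommGroup H] [InnerProductSpace ℂ H] (J : H →L[ℂ] X)

def friedrichsGraph : Submodule ℂ (X × CDual X) where
  carrier := {p | ∃ h, J h = p.1 ∧ ∀ z, p.2 (J z) = ⟪z, h⟫_ℂ}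
  add_mem' := by
    rintro ⟨y, w⟩ ⟨y', w'⟩ ⟨h, rfl, hw⟩ ⟨h', rfl, hw'⟩
    exact ⟨h + h', map_add J h h', fun z => by simp [hw z, hw' z]⟩
  zero_mem' := ⟨0, map_zero J, fun z => by simp⟩
  smul_mem' := by
    rintro c ⟨y, w⟩ ⟨h, rfl, hw⟩
    exact ⟨c • h, map_smul J c h, fun z => by simp [hw z]⟩

def friedrichsOp : X →ₗ.[ℂ] CDual X := (friedrichsGraph J).toLinearPMap

variable {J}

theorem friedrichsOp_graph (hinj : Function.Injective J) (hd : DenseRange J) :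
    (friedrichsOp J).graph = friedrichsGraph J := by
  refine Submodule.toLinearPMap_graph_eq _ ?_
  rintro ⟨y, w⟩ ⟨h, hh, hw⟩ (rfl : y = 0)
  obtain rfl : h = 0 := hinj (by rw [hh, map_zero])
  ext x
  refine hd.induction_on x (isClosed_eq w.continuous continuous_const) fun z => ?_
  simpa using hw z

theorem exists_friedrichsOp_apply_eq_inner (hinj : Function.Injective J) (hd : DenseRange J)
    (x : (friedrichsOp J).domain) : ∃ h, J h = x ∧ ∀ z, friedrichsOp J x (J z) = ⟪z, h⟫_ℂ := by
  have hx := (friedrichsOp J).mem_graph x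
  rwa [friedrichsOp_graph hinj hd] at hx

theorem exists_friedrichsOp_eq_of_mem_graph (hinj : Function.Injective J) (hd : DenseRange J)
    {y : X} {w : CDual X} (hyw : (y, w) ∈ friedrichsGraph J) :
    ∃ hy : y ∈ (friedrichsOp J).domain, friedrichsOp J ⟨y, hy⟩ = w := by
  rw [← friedrichsOp_graph hinj hd] at hyw
  have hy := LinearPMap.mem_domain_iff.2 ⟨w, hyw⟩
  exact ⟨hy, ((LinearPMap.image_iff hy).2 hyw).symm⟩

theorem le_friedrichsOp (hinj : Function.Injective J) (hd : DenseRange J) {a : X →ₗ.[ℂ] CDual X}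
    (ha : ∀ x : a.domain, ∃ h, J h = x ∧ ∀ z, a x (J z) = ⟪z, h⟫_ℂ) : a ≤ friedrichsOp J := by
  refine LinearPMap.le_of_le_graph ?_
  rw [friedrichsOp_graph hinj hd]
  rintro ⟨y, w⟩ hyw
  obtain ⟨x, rfl, rfl⟩ := (LinearPMap.mem_graph_iff a).1 hyw
  exact ha x

theorem friedrichsOp_apply_eq_conj (hinj : Function.Injective J) (hd : DenseRange J)
    (x y : (friedrichsOp J).domain) :
    friedrichsOp J x (y : X) = conj (friedrichsOp J y (x : X)) := by
  obtain ⟨h, hx, hxh⟩ := exists_friedrichsOp_apply_eq_inner hinj hd x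
  obtain ⟨k, hy, hyk⟩ := exists_friedrichsOp_apply_eq_inner hinj hd y
  rw [← hx, ← hy, hxh, hyk, inner_conj_symm]

theorem isCoerciveOp_friedrichsOp (hinj : Function.Injective J) (hd : DenseRange J) {γ : ℝ}
    (hJ : ∀ h, γ * ‖J h‖ ^ 2 ≤ ‖h‖ ^ 2) : IsCoerciveOp (friedrichsOp J) γ := by
  intro x
  obtain ⟨h, hx, hxh⟩ := exists_friedrichsOp_apply_eq_inner hinj hd x
  rw [← hx, hxh, inner_self_eq_norm_sq_to_K, ← RCLike.ofReal_pow]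
  exact Complex.real_le_real.2 (hJ h)

theorem friedrichsOp_maximal [CompleteSpace H] (hinj : Function.Injective J) (hd : DenseRange J)
    (y : X) (w : CDual X)
    (hyw : ∀ x : (friedrichsOp J).domain, friedrichsOp J x y = conj (w (x : X))) :
    ∃ hy : y ∈ (friedrichsOp J).domain, friedrichsOp J ⟨y, hy⟩ = w := by
  obtain ⟨h, hw⟩ := exists_inner_eq_of_conjLinear (w.comp J)
  suffices y = J h from this ▸ exists_friedrichsOp_eq_of_mem_graph hinj hd ⟨h, rfl, hw⟩
  -- Each `v ∈ X*` is `A (J k)` for some `k`, so `v y = conj (w (J k)) = ⟪h, k⟫ = v (J h)`.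
  refine sub_eq_zero.1 (eq_zero_of_forall_cdual_eq_zero fun v => ?_)
  obtain ⟨k, hv⟩ := exists_inner_eq_of_conjLinear (v.comp J)
  obtain ⟨hk, hAk⟩ := exists_friedrichsOp_eq_of_mem_graph hinj hd ⟨k, rfl, hv⟩
  have hvy : v y = conj (w (J k)) := hAk ▸ hyw ⟨J k, hk⟩
  have hwk : w (J k) = ⟪k, h⟫_ℂ := hw k
  have hvh : v (J h) = ⟪h, k⟫_ℂ := hv h
  rw [map_sub, hvy, hwk, hvh, inner_conj_symm, sub_self]

end FriedrichsOperator

open EnergySpace in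
theorem exists_hilbert_embedding {X : Type u} [NormedAddCommGroup X] [NormedSpace ℂ X]
    [CompleteSpace X] {a : X →ₗ.[ℂ] CDual X} {γ : ℝ} (hγ : 0 < γ) (ha : IsCoerciveOp a γ) :
    ∃ (H : Type u) (_ : NormedAddCommGroup H) (_ : InnerProductSpace ℂ H) (_ : CompleteSpace H)
      (J : H →L[ℂ] X), Function.Injective J ∧ (∀ h, γ * ‖J h‖ ^ 2 ≤ ‖h‖ ^ 2) ∧
      ∀ x : a.domain, ∃ h, J h = x ∧ ∀ z, a x (J z) = ⟪z, h⟫_ℂ := by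
  let core := innerCore a hγ ha
  let _ : NormedAddCommGroup (EnergySpace a) := core.toNormedAddCommGroup
  let _ : InnerProductSpace ℂ (EnergySpace a) := InnerProductSpace.ofCore core.toCore
  let toX : EnergySpace a →ₗ[ℂ] X := a.domain.subtype ∘ₗ (toDomain a).toLinearMap
  have hsq (e : EnergySpace a) : γ * ‖toX e‖ ^ 2 ≤ ‖e‖ ^ 2 := by
    rw [← inner_self_eq_norm_sq (𝕜 := ℂ) e]
    exact ha.le_re _
  let ι := toX.mkContinuous (√γ)⁻¹ fun e =>
    le_inv_sqrt_mul_of_mul_sq_le hγ (norm_nonneg _) (norm_nonneg _) (hsq e)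
  have hι (e z : EnergySpace a) : a (toDomain a e) (ι z) = ⟪z, e⟫_ℂ := rfl
  refine ⟨_, inferInstance, inferInstance, inferInstance, completionExtension ι,
    completionExtension_injective fun e => ⟨_, hι e⟩, mul_norm_completionExtension_sq_le hsq,
    fun x => ⟨(toDomain a).symm x, by simp [ι, toX], apply_completionExtension_eq_inner (hι _)⟩⟩

/-- Friedrichs extension. Every densely defined positive operator
a : X -> X* with positive lower bound gamma ((ax,x) >= gamma * norm x ^ 2) admits a
positive self-adjoint extension A_F satisfying (A_F x, x) >= gamma * norm x ^ 2 for
all x in dom A_F. -/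
theorem statement6
    {X : Type*} [NormedAddCommGroup X] [NormedSpace ℂ X] [CompleteSpace X]
    (a : X →ₗ.[ℂ] CDual X) (hdense : Dense (a.domain : Set X))
    (γ : ℝ) (hγ : 0 < γ)
    (hlb : ∀ x : a.domain, (↑(γ * ‖(x : X)‖ ^ 2) : ℂ) ≤ a x (x : X)) :
    ∃ A : X →ₗ.[ℂ] CDual X, a ≤ A ∧ IsSelfAdjointOp A ∧ IsPositiveOp A ∧
      ∀ x : A.domain, (↑(γ * ‖(x : X)‖ ^ 2) : ℂ) ≤ A x (x : X) := by
  obtain ⟨H, _, _, _, J, hinj, hJ, ha⟩ := exists_hilbert_embedding hγ hlb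
  have hd : DenseRange J := hdense.mono fun x hx => (ha ⟨x, hx⟩).imp fun _ h => h.1
  have hle : a ≤ friedrichsOp J := le_friedrichsOp hinj hd ha
  have hcoer : IsCoerciveOp (friedrichsOp J) γ := isCoerciveOp_friedrichsOp hinj hd hJ
  exact ⟨friedrichsOp J, hle,
    ⟨hdense.mono hle.1, friedrichsOp_apply_eq_conj hinj hd, friedrichsOp_maximal hinj hd⟩,
    hcoer.isPositiveOp hγ.le, hcoer⟩
end
end

section
/- The continuous extension I_a : H → X of the inclusion dom a ↪ X to the form-completion H of (dom a, t_a) is injective, where for all t ∈ dom a and y ∈ H one has [t,y]_H = (at, I_a y). -/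
open scoped ComplexConjugate ComplexOrder InnerProductSpace
noncomputable section

/-- a : X -> X* densely defined positive with lower bound gamma > 0;
H is the Hilbert-space completion of dom a under the inner product [x,y] = (ax,y)
(encoded by a linear map phi : dom a -> H with dense range and
inner (phi y) (phi x) = (a x)(y), Mathlib's inner being conjugate-linear in the
first slot), and I_a : H -> X is the continuous extension of the inclusion
dom a -> X (so I_a (phi x) = x).  Then [t,y]_H = (a t, I_a y) for all t in dom a,
y in H, and I_a is injective. -/
theorem statement7
    {X : Type*} [NormedAddCommGroup X] [NormedSpace ℂ X] [CompleteSpace X]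
    (a : X →ₗ.[ℂ] CDual X) (hdense : Dense (a.domain : Set X))
    (γ : ℝ) (hγ : 0 < γ)
    (hlb : ∀ x : a.domain, (↑(γ * ‖(x : X)‖ ^ 2) : ℂ) ≤ a x (x : X))
    {H : Type*} [NormedAddCommGroup H] [InnerProductSpace ℂ H] [CompleteSpace H]
    (φ : a.domain →ₗ[ℂ] H) (hφdense : DenseRange φ)
    (hφ : ∀ x y : a.domain, ⟪φ y, φ x⟫_ℂ = a x (y : X))
    (Iₐ : H →L[ℂ] X) (hI : ∀ x : a.domain, Iₐ (φ x) = (x : X)) :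
    (∀ (t : a.domain) (y : H), ⟪y, φ t⟫_ℂ = a t (Iₐ y)) ∧
      Function.Injective Iₐ := by
  have key : ∀ (t : a.domain) (y : H), ⟪y, φ t⟫_ℂ = a t (Iₐ y) := by
    intro t
    have hf : Continuous fun y : H => ⟪y, φ t⟫_ℂ :=
      continuous_id.inner continuous_const
    have hg : Continuous fun y : H => a t (Iₐ y) :=
      (a t).continuous.comp Iₐ.continuous
    have heq : (fun y : H => ⟪y, φ t⟫_ℂ) = fun y : H => a t (Iₐ y) := by
      apply Continuous.ext_on hφdense hf hg
      rintro _ ⟨x, rfl⟩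
      simp [hφ t x, hI x]
    intro y
    exact congrFun heq y
  refine ⟨key, ?_⟩
  have hker : ∀ y : H, Iₐ y = 0 → y = 0 := by
    intro y hy
    have h0 : ∀ t : a.domain, ⟪y, φ t⟫_ℂ = 0 := by
      intro t
      rw [key t y, hy]
      simp
    have hz : (fun z : H => ⟪y, z⟫_ℂ) = fun _ : H => (0 : ℂ) := by
      apply Continuous.ext_on hφdense (continuous_const.inner continuous_id)
        continuous_const
      rintro _ ⟨x, rfl⟩
      exact h0 x
    have := congrFun hz y
    simpa [inner_self_eq_zero] using this
  intro y₁ y₂ h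
  have : Iₐ (y₁ - y₂) = 0 := by simp [map_sub, h]
  have := hker _ this
  exact sub_eq_zero.mp this
end
end

section
/- For a positive self-adjoint operator A with factorization A = J J*, one has dom J* = { y ∈ X : sup{ |(Ax,y)|² : x ∈ dom A, (Ax,x) ≤ 1 } < ∞ } and [J* y, J* y] = sup{ |(Ax,y)|² : x ∈ dom A, (Ax,x) ≤ 1 } for y ∈ dom J*. -/
open scoped ComplexConjugate ComplexOrder InnerProductSpace
noncomputable section

/-- Auxiliary scaling lemma: if `‖A x y‖² ≤ b` whenever `(Ax,x) ≤ 1`, then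
`‖A x y‖² ≤ b ‖Φ x‖²` for all `x`. -/
lemma keyScale {X : Type*} [NormedAddCommGroup X] [NormedSpace ℂ X]
    {H : Type*} [NormedAddCommGroup H] [InnerProductSpace ℂ H]
    (A : X →ₗ.[ℂ] CDual X) (Φ : A.domain → H)
    (hΦ : ∀ x y : A.domain, ⟪Φ y, Φ x⟫_ℂ = A x (y : X))
    (y : X) (b : ℝ) (hbd : ∀ x : A.domain, A x (x : X) ≤ 1 → ‖A x y‖ ^ 2 ≤ b) :
    ∀ x : A.domain, ‖A x y‖ ^ 2 ≤ b * ‖Φ x‖ ^ 2 := by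
  have hnorm : ∀ x : A.domain, A x (x : X) = ((‖Φ x‖ ^ 2 : ℝ) : ℂ) := by
    intro x
    rw [← hΦ x x, inner_self_eq_norm_sq_to_K]
    norm_cast
  intro x
  have hb0 : 0 ≤ b := by
    have h0 := hbd 0 (by
      rw [hnorm]
      have : Φ (0 : A.domain) = Φ 0 := rfl
      rw [show ((‖Φ (0 : A.domain)‖ ^ 2 : ℝ) : ℂ) ≤ 1 ↔ (‖Φ (0 : A.domain)‖ ^ 2 : ℝ) ≤ 1 by
        rw [show (1 : ℂ) = ((1 : ℝ) : ℂ) by norm_num, Complex.real_le_real]]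
      have : A (0 : A.domain) ((0 : A.domain) : X) = 0 := by
        rw [A.map_zero]; simp
      rw [hnorm] at this
      have h2 : (‖Φ (0 : A.domain)‖ ^ 2 : ℝ) = 0 := by
        exact_mod_cast this
      rw [h2]; norm_num)
    calc (0 : ℝ) ≤ ‖A (0 : A.domain) y‖ ^ 2 := by positivity
      _ ≤ b := h0
  -- for every ε > 0, ‖A x y‖² ≤ b * (‖Φ x‖ + ε)²
  have hε : ∀ ε : ℝ, 0 < ε → ‖A x y‖ ^ 2 ≤ b * (‖Φ x‖ + ε) ^ 2 := by
    intro ε hε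
    set c : ℝ := ‖Φ x‖ + ε with hc
    have hc0 : 0 < c := by positivity
    set r : ℝ := c⁻¹ with hr
    have hr0 : 0 < r := by positivity
    set x' : A.domain := ((r : ℂ)) • x with hx'
    have hAx' : A x' ((x' : A.domain) : X) = ((r ^ 2 * ‖Φ x‖ ^ 2 : ℝ) : ℂ) := by
      rw [hx', A.map_smul]
      have hcoe : ((((r : ℂ) • x : A.domain)) : X) = (r : ℂ) • (x : X) := rfl
      rw [ContinuousLinearMap.smul_apply, hcoe, ContinuousLinearMap.map_smulₛₗ,
        Complex.conj_ofReal, hnorm x]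
      push_cast [smul_eq_mul]
      ring
    have hle : A x' ((x' : A.domain) : X) ≤ 1 := by
      rw [hAx', show (1 : ℂ) = ((1 : ℝ) : ℂ) by norm_num, Complex.real_le_real]
      have h1 : r * ‖Φ x‖ ≤ 1 := by
        rw [hr, inv_mul_le_iff₀ hc0, mul_one, hc]
        linarith
      calc r ^ 2 * ‖Φ x‖ ^ 2 = (r * ‖Φ x‖) ^ 2 := by ring
        _ ≤ 1 := pow_le_one₀ (by positivity) h1
    have hbx := hbd x' hle
    have hAx'y : ‖A x' y‖ ^ 2 = r ^ 2 * ‖A x y‖ ^ 2 := by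
      rw [hx', A.map_smul, ContinuousLinearMap.smul_apply, norm_smul]
      simp [Complex.norm_real, abs_of_pos hr0]
      ring
    rw [hAx'y] at hbx
    have hrc : r * c = 1 := inv_mul_cancel₀ hc0.ne'
    calc ‖A x y‖ ^ 2 = (r * c) ^ 2 * ‖A x y‖ ^ 2 := by rw [hrc]; ring
      _ = c ^ 2 * (r ^ 2 * ‖A x y‖ ^ 2) := by ring
      _ ≤ c ^ 2 * b := mul_le_mul_of_nonneg_left hbx (by positivity)
      _ = b * c ^ 2 := by ring
  -- take ε → 0
  have htend : Filter.Tendsto (fun ε : ℝ => b * (‖Φ x‖ + ε) ^ 2) (nhdsWithin 0 (Set.Ioi 0))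
      (nhds (b * (‖Φ x‖ + 0) ^ 2)) := by
    apply Filter.Tendsto.mono_left _ nhdsWithin_le_nhds
    exact (Continuous.tendsto
      (continuous_const.mul ((continuous_const.add continuous_id).pow 2)) 0)
  have := ge_of_tendsto htend (by
    filter_upwards [self_mem_nhdsWithin] with ε hεm
    exact hε ε hεm)
  simpa using this

/-- A positive self-adjoint, with the factorization A = J J*:
H is the completion of ran A with [Ax, Ay] = (Ax, y), encoded via Φ : dom A -> H
(Φ x represents Ax) with dense range and inner (Φ y) (Φ x) = (A x)(y); J is defined
on ran Φ by J (Φ x) = A x, and S = J* is its adjoint.  Then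
dom J* = { y : sup { |(Ax,y)|² : x ∈ dom A, (Ax,x) ≤ 1 } < ∞ } and
[J* y, J* y] = that supremum for every y ∈ dom J*. -/
theorem statement10
    {X : Type*} [NormedAddCommGroup X] [NormedSpace ℂ X] [CompleteSpace X]
    {H : Type*} [NormedAddCommGroup H] [InnerProductSpace ℂ H] [CompleteSpace H]
    (A : X →ₗ.[ℂ] CDual X) (hsa : IsSelfAdjointOp A) (hpos : IsPositiveOp A)
    (Φ : A.domain → H) (hΦdense : DenseRange Φ)
    (hΦ : ∀ x y : A.domain, ⟪Φ y, Φ x⟫_ℂ = A x (y : X))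
    (J : H →ₗ.[ℂ] CDual X)
    (hJdom : ∀ h : H, h ∈ J.domain ↔ h ∈ Set.range Φ)
    (hJval : ∀ (x : A.domain) (hh : Φ x ∈ J.domain), J ⟨Φ x, hh⟩ = A x)
    (S : X →ₗ.[ℂ] H)
    (hSdom : ∀ y : X, y ∈ S.domain ↔
      ∃ k : H, ∀ h : J.domain, J h y = ⟪k, (h : H)⟫_ℂ)
    (hSval : ∀ (y : S.domain) (h : J.domain), J h (y : X) = ⟪S y, (h : H)⟫_ℂ) :
    (∀ y : X, y ∈ S.domain ↔
      BddAbove { r : ℝ | ∃ x : A.domain, A x (x : X) ≤ 1 ∧ r = ‖A x y‖ ^ 2 }) ∧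
    (∀ y : S.domain, ‖S y‖ ^ 2 =
      sSup { r : ℝ | ∃ x : A.domain, A x (x : X) ≤ 1 ∧ r = ‖A x (y : X)‖ ^ 2 }) := by
  classical
  have hnorm : ∀ x : A.domain, A x (x : X) = ((‖Φ x‖ ^ 2 : ℝ) : ℂ) := by
    intro x
    rw [← hΦ x x, inner_self_eq_norm_sq_to_K]
    norm_cast
  have hΦmem : ∀ x : A.domain, Φ x ∈ J.domain := fun x => (hJdom _).mpr ⟨x, rfl⟩
  -- (Ax,x) ≤ 1 implies ‖Φ x‖ ≤ 1
  have hle1 : ∀ x : A.domain, A x (x : X) ≤ 1 → ‖Φ x‖ ≤ 1 := by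
    intro x hx
    rw [hnorm, show (1 : ℂ) = ((1 : ℝ) : ℂ) by norm_num, Complex.real_le_real] at hx
    nlinarith [norm_nonneg (Φ x)]
  -- for y ∈ dom S, (Ax, y) = ⟪S y, Φ x⟫
  have hrep : ∀ (y : S.domain) (x : A.domain), A x (y : X) = ⟪S y, Φ x⟫_ℂ := by
    intro y x
    have := hSval y ⟨Φ x, hΦmem x⟩
    rw [hJval x (hΦmem x)] at this
    exact this
  -- 0 is in the set
  have hzero : ∀ y : X, (0 : ℝ) ∈
      { r : ℝ | ∃ x : A.domain, A x (x : X) ≤ 1 ∧ r = ‖A x y‖ ^ 2 } := by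
    intro y
    refine ⟨0, ?_, ?_⟩
    · rw [A.map_zero]
      simp only [ContinuousLinearMap.zero_apply]
      exact zero_le_one
    · rw [A.map_zero]
      simp
  -- bound for y ∈ dom S
  have hbound : ∀ (y : S.domain) (r : ℝ),
      r ∈ { r : ℝ | ∃ x : A.domain, A x (x : X) ≤ 1 ∧ r = ‖A x (y : X)‖ ^ 2 } →
      r ≤ ‖S y‖ ^ 2 := by
    rintro y r ⟨x, hx1, rfl⟩
    rw [hrep y x]
    have h1 := norm_inner_le_norm (𝕜 := ℂ) (S y) (Φ x)
    have h2 := hle1 x hx1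
    have h3 : ‖⟪S y, Φ x⟫_ℂ‖ ≤ ‖S y‖ := by
      calc ‖⟪S y, Φ x⟫_ℂ‖ ≤ ‖S y‖ * ‖Φ x‖ := h1
        _ ≤ ‖S y‖ * 1 := by
          apply mul_le_mul_of_nonneg_left h2 (norm_nonneg _)
        _ = ‖S y‖ := mul_one _
    nlinarith [norm_nonneg (⟪S y, Φ x⟫_ℂ), norm_nonneg (S y)]
  constructor
  · intro y
    constructor
    · intro hy
      exact ⟨‖S ⟨y, hy⟩‖ ^ 2, fun r hr => hbound ⟨y, hy⟩ r hr⟩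
    · rintro ⟨M, hM⟩
      have hMub : ∀ x : A.domain, A x (x : X) ≤ 1 → ‖A x y‖ ^ 2 ≤ M := by
        intro x hx
        exact hM ⟨x, hx, rfl⟩
      have hkey := keyScale A Φ hΦ y M hMub
      have hM0 : 0 ≤ M := hM (hzero y)
      -- the linear functional h ↦ J h y on J.domain
      let ev : CDual X →ₗ[ℂ] ℂ :=
        { toFun := fun w => w y
          map_add' := fun w₁ w₂ => rfl
          map_smul' := fun c w => rfl }
      let ℓ₀ : J.domain →ₗ[ℂ] ℂ := ev.comp J.toFun
      have hℓ₀ : ∀ h : J.domain, ℓ₀ h = J h y := fun h => rfl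
      have hℓbd : ∀ h : J.domain, ‖ℓ₀ h‖ ≤ Real.sqrt M * ‖(h : H)‖ := by
        intro h
        obtain ⟨x, hx⟩ := (hJdom (h : H)).mp h.2
        have hh : h = ⟨Φ x, hΦmem x⟩ := Subtype.ext hx.symm
        rw [hℓ₀, hh]
        have := hJval x (hΦmem x)
        rw [this]
        have h1 : ‖A x y‖ ^ 2 ≤ M * ‖Φ x‖ ^ 2 := hkey x
        have h2 : ‖A x y‖ ≤ Real.sqrt M * ‖Φ x‖ := by
          have := Real.sqrt_le_sqrt h1
          rwa [Real.sqrt_sq (norm_nonneg _), Real.sqrt_mul hM0,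
            Real.sqrt_sq (norm_nonneg _)] at this
        simpa using h2
      let ℓ : J.domain →L[ℂ] ℂ := ℓ₀.mkContinuous (Real.sqrt M) hℓbd
      obtain ⟨g, hg, -⟩ := exists_extension_norm_eq (J.domain) ℓ
      refine (hSdom y).mpr ⟨(InnerProductSpace.toDual ℂ H).symm g, fun h => ?_⟩
      have : ⟪((InnerProductSpace.toDual ℂ H).symm g : H), (h : H)⟫_ℂ = g (h : H) := by
        rw [← InnerProductSpace.toDual_apply_apply]
        simp
      rw [this, hg h]
      rfl
  · intro y
    set R := { r : ℝ | ∃ x : A.domain, A x (x : X) ≤ 1 ∧ r = ‖A x (y : X)‖ ^ 2 } with hR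
    have hne : R.Nonempty := ⟨0, hzero y⟩
    have hbdd : BddAbove R := ⟨‖S y‖ ^ 2, fun r hr => hbound y r hr⟩
    refine le_antisymm ?_ (csSup_le hne (fun r hr => hbound y r hr))
    rw [le_csSup_iff hbdd hne]
    intro b hb
    have hb0 : 0 ≤ b := hb (hzero y)
    have hbd : ∀ x : A.domain, A x (x : X) ≤ 1 → ‖A x (y : X)‖ ^ 2 ≤ b :=
      fun x hx => hb ⟨x, hx, rfl⟩
    have hkey := keyScale A Φ hΦ (y : X) b hbd
    set k : H := S y with hk
    have hkx : ∀ x : A.domain, ‖⟪k, Φ x⟫_ℂ‖ ^ 2 ≤ b * ‖Φ x‖ ^ 2 := by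
      intro x
      rw [← hrep y x]
      exact hkey x
    -- extend to all of H by density
    have hall : ∀ h : H, ‖⟪k, h⟫_ℂ‖ ^ 2 ≤ b * ‖h‖ ^ 2 := by
      have hc : IsClosed { h : H | ‖⟪k, h⟫_ℂ‖ ^ 2 ≤ b * ‖h‖ ^ 2 } := by
        apply isClosed_le
        · exact ((continuous_const.inner continuous_id).norm.pow 2)
        · exact (continuous_const.mul (continuous_norm.pow 2))
      intro h
      have hsub : Set.range Φ ⊆ { h : H | ‖⟪k, h⟫_ℂ‖ ^ 2 ≤ b * ‖h‖ ^ 2 } := by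
        rintro _ ⟨x, rfl⟩
        exact hkx x
      have := closure_minimal hsub hc
      rw [hΦdense.closure_range] at this
      exact this (Set.mem_univ h)
    have hkk := hall k
    have hn : ‖⟪k, k⟫_ℂ‖ = ‖k‖ ^ 2 := by
      rw [← inner_self_re_eq_norm, inner_self_eq_norm_sq]
    rw [hn] at hkk
    -- ‖k‖⁴ ≤ b ‖k‖² ⇒ ‖k‖² ≤ b
    rcases eq_or_ne (‖k‖) 0 with h0 | h0
    · rw [h0]; simpa using hb0
    · have hk0 : 0 < ‖k‖ := lt_of_le_of_ne (norm_nonneg _) (Ne.symm h0)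
      nlinarith [hkk, hk0]
end
end

section
/- The relation A ≥ B defined by dom J_A* ⊆ dom J_B* and [J_A* y]²_A ≥ [J_B* y]²_B for all y ∈ dom J_A* is antisymmetric: if A ≥ B and B ≥ A then A = B. -/
open scoped ComplexConjugate ComplexOrder InnerProductSpace
noncomputable section

/-! For `x ∈ dom A` the element `J_A* x` of `H_A` is the class `Φ_A x` of `Ax`, so
`(Ax, y) = [J_A* y, J_A* x]_A` for every `y ∈ dom J_A*`. The two order relations force
`dom J_A* = dom J_B*` and, by polarization, equal inner products `[J_A* ·, J_A* ·]_A` and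
`[J_B* ·, J_B* ·]_B` there. Hence `(Bz, x) = conj (Ax, z)` for `x ∈ dom A`, `z ∈ dom B`, and
maximality of the self-adjoint `B` gives `A ⊆ B`; symmetrically `B ⊆ A`. -/

theorem LinearMap.inner_map_map_eq_of_norm_eq {E F G : Type*} [AddCommGroup E] [Module ℂ E]
    [NormedAddCommGroup F] [InnerProductSpace ℂ F]
    [NormedAddCommGroup G] [InnerProductSpace ℂ G]
    (S : E →ₗ[ℂ] F) (T : E →ₗ[ℂ] G) (h : ∀ v, ‖S v‖ = ‖T v‖) (y z : E) :
    ⟪S y, S z⟫_ℂ = ⟪T y, T z⟫_ℂ := by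
  rw [inner_eq_sum_norm_sq_div_four, inner_eq_sum_norm_sq_div_four]
  simp only [← map_add, ← map_sub, ← map_smul, h]

theorem IsSelfAdjointOp.le_of_apply_eq_conj {X : Type*} [NormedAddCommGroup X] [NormedSpace ℂ X]
    {A B : X →ₗ.[ℂ] CDual X} (hB : IsSelfAdjointOp B)
    (h : ∀ (x : A.domain) (z : B.domain), B z (x : X) = conj (A x (z : X))) : A ≤ B := by
  choose hdom happly using fun x : A.domain => hB.2.2 x (A x) (h x)
  exact ⟨fun x hx => hdom ⟨x, hx⟩, fun x y hxy => by
    obtain rfl : y = ⟨x, hdom x⟩ := Subtype.ext hxy.symm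
    exact (happly x).symm⟩

/-- `Φ x` is the class of `Ax` in the completion `H` of `ran A`, `J` is `J_A` (defined on
`ran Φ`, sending the class of `Ax` to `Ax`) and `S` is its adjoint `J_A*`. -/
structure IsFactorization {X H : Type*} [NormedAddCommGroup X] [NormedSpace ℂ X]
    [NormedAddCommGroup H] [InnerProductSpace ℂ H]
    (A : X →ₗ.[ℂ] CDual X) (Φ : A.domain → H) (J : H →ₗ.[ℂ] CDual X) (S : X →ₗ.[ℂ] H) :
    Prop where
  denseRange : DenseRange Φ
  inner_eq : ∀ x y : A.domain, ⟪Φ y, Φ x⟫_ℂ = A x (y : X)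
  mem_domain_iff : ∀ h : H, h ∈ J.domain ↔ h ∈ Set.range Φ
  apply_eq : ∀ (x : A.domain) (hh : Φ x ∈ J.domain), J ⟨Φ x, hh⟩ = A x
  mem_adjoint_domain_iff : ∀ y : X, y ∈ S.domain ↔
    ∃ k : H, ∀ h : J.domain, J h y = ⟪k, (h : H)⟫_ℂ
  adjoint_apply : ∀ (y : S.domain) (h : J.domain), J h (y : X) = ⟪S y, (h : H)⟫_ℂ

namespace IsFactorization

variable {X H : Type*} [NormedAddCommGroup X] [NormedSpace ℂ X]
  [NormedAddCommGroup H] [InnerProductSpace ℂ H]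
  {A : X →ₗ.[ℂ] CDual X} {Φ : A.domain → H} {J : H →ₗ.[ℂ] CDual X} {S : X →ₗ.[ℂ] H}

theorem apply_eq_inner (hF : IsFactorization A Φ J S) (x : A.domain) (h : J.domain) :
    J h (x : X) = ⟪Φ x, (h : H)⟫_ℂ := by
  obtain ⟨z, hz, rfl⟩ : ∃ z : A.domain, ∃ hz : Φ z ∈ J.domain, h = ⟨Φ z, hz⟩ := by
    obtain ⟨z, hz⟩ := (hF.mem_domain_iff h).mp h.2
    exact ⟨z, hz ▸ h.2, Subtype.ext hz.symm⟩
  rw [hF.apply_eq, ← hF.inner_eq]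

theorem mem_adjoint_domain (hF : IsFactorization A Φ J S) (x : A.domain) :
    (x : X) ∈ S.domain :=
  (hF.mem_adjoint_domain_iff x).mpr ⟨Φ x, hF.apply_eq_inner x⟩

theorem adjoint_apply_eq (hF : IsFactorization A Φ J S) (x : A.domain) :
    S ⟨x, hF.mem_adjoint_domain x⟩ = Φ x :=
  hF.denseRange.eq_of_inner_left ℂ fun z => by
    have hz : Φ z ∈ J.domain := (hF.mem_domain_iff _).mpr ⟨z, rfl⟩
    rw [← hF.adjoint_apply _ ⟨Φ z, hz⟩, hF.apply_eq_inner x ⟨Φ z, hz⟩]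

theorem apply_eq_inner_adjoint (hF : IsFactorization A Φ J S) (x : A.domain) (y : S.domain) :
    A x (y : X) = ⟪S y, S ⟨x, hF.mem_adjoint_domain x⟩⟫_ℂ := by
  have hx : Φ x ∈ J.domain := (hF.mem_domain_iff _).mpr ⟨x, rfl⟩
  rw [hF.adjoint_apply_eq, ← hF.apply_eq x hx, hF.adjoint_apply]

end IsFactorization

theorem statement11_general
    {X : Type*} [NormedAddCommGroup X] [NormedSpace ℂ X]
    {HA : Type*} [NormedAddCommGroup HA] [InnerProductSpace ℂ HA]
    {HB : Type*} [NormedAddCommGroup HB] [InnerProductSpace ℂ HB]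
    (A : X →ₗ.[ℂ] CDual X) (hsaA : IsSelfAdjointOp A)
    (B : X →ₗ.[ℂ] CDual X) (hsaB : IsSelfAdjointOp B)
    (ΦA : A.domain → HA) (hΦAdense : DenseRange ΦA)
    (hΦA : ∀ x y : A.domain, ⟪ΦA y, ΦA x⟫_ℂ = A x (y : X))
    (JA : HA →ₗ.[ℂ] CDual X)
    (hJAdom : ∀ h : HA, h ∈ JA.domain ↔ h ∈ Set.range ΦA)
    (hJAval : ∀ (x : A.domain) (hh : ΦA x ∈ JA.domain), JA ⟨ΦA x, hh⟩ = A x)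
    (SA : X →ₗ.[ℂ] HA)
    (hSAdom : ∀ y : X, y ∈ SA.domain ↔
      ∃ k : HA, ∀ h : JA.domain, JA h y = ⟪k, (h : HA)⟫_ℂ)
    (hSAval : ∀ (y : SA.domain) (h : JA.domain), JA h (y : X) = ⟪SA y, (h : HA)⟫_ℂ)
    (ΦB : B.domain → HB) (hΦBdense : DenseRange ΦB)
    (hΦB : ∀ x y : B.domain, ⟪ΦB y, ΦB x⟫_ℂ = B x (y : X))
    (JB : HB →ₗ.[ℂ] CDual X)
    (hJBdom : ∀ h : HB, h ∈ JB.domain ↔ h ∈ Set.range ΦB)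
    (hJBval : ∀ (x : B.domain) (hh : ΦB x ∈ JB.domain), JB ⟨ΦB x, hh⟩ = B x)
    (SB : X →ₗ.[ℂ] HB)
    (hSBdom : ∀ y : X, y ∈ SB.domain ↔
      ∃ k : HB, ∀ h : JB.domain, JB h y = ⟪k, (h : HB)⟫_ℂ)
    (hSBval : ∀ (y : SB.domain) (h : JB.domain), JB h (y : X) = ⟪SB y, (h : HB)⟫_ℂ)
    (hAgeB : (SA.domain : Set X) ⊆ (SB.domain : Set X))
    (hAgeB' : ∀ (y : X) (hyA : y ∈ SA.domain) (hyB : y ∈ SB.domain),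
      ‖SB ⟨y, hyB⟩‖ ^ 2 ≤ ‖SA ⟨y, hyA⟩‖ ^ 2)
    (hBgeA : (SB.domain : Set X) ⊆ (SA.domain : Set X))
    (hBgeA' : ∀ (y : X) (hyB : y ∈ SB.domain) (hyA : y ∈ SA.domain),
      ‖SA ⟨y, hyA⟩‖ ^ 2 ≤ ‖SB ⟨y, hyB⟩‖ ^ 2) :
    A = B := by
  have hA : IsFactorization A ΦA JA SA := ⟨hΦAdense, hΦA, hJAdom, hJAval, hSAdom, hSAval⟩
  have hB : IsFactorization B ΦB JB SB := ⟨hΦBdense, hΦB, hJBdom, hJBval, hSBdom, hSBval⟩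
  have hle : SA.domain ≤ SB.domain := hAgeB
  have hnorm : ∀ y : SA.domain, ‖SA y‖ = ‖SB (Submodule.inclusion hle y)‖ := fun ⟨y, hy⟩ =>
    (sq_eq_sq₀ (norm_nonneg _) (norm_nonneg _)).mp
      (le_antisymm (hBgeA' y (hle hy) hy) (hAgeB' y hy (hle hy)))
  have hinner :=
    SA.toFun.inner_map_map_eq_of_norm_eq (SB.toFun.comp (Submodule.inclusion hle)) hnorm
  have hform (x : A.domain) (z : B.domain) : B z (x : X) = conj (A x (z : X)) := by
    rw [hB.apply_eq_inner_adjoint z ⟨x, hle (hA.mem_adjoint_domain x)⟩,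
      hA.apply_eq_inner_adjoint x ⟨z, hBgeA (hB.mem_adjoint_domain z)⟩, inner_conj_symm]
    exact (hinner ⟨x, _⟩ ⟨z, _⟩).symm
  exact le_antisymm (hsaB.le_of_apply_eq_conj hform) <| hsaA.le_of_apply_eq_conj fun x z => by
    rw [hform z x, Complex.conj_conj]

/-- A, B positive self-adjoint operators from X to X* with
factorizations A = J_A J_A*, B = J_B J_B* via the auxiliary Hilbert spaces H_A, H_B
(completions of ran A, ran B with [Ax,Ay] = (Ax,y), encoded by the maps ΦA, ΦB).
The order relation "A ≥ B iff dom J_A* ⊆ dom J_B* and [J_A* y]² ≥ [J_B* y]² on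
dom J_A*" is antisymmetric: if A ≥ B and B ≥ A then A = B. -/
theorem statement11
    {X : Type*} [NormedAddCommGroup X] [NormedSpace ℂ X] [CompleteSpace X]
    {HA : Type*} [NormedAddCommGroup HA] [InnerProductSpace ℂ HA] [CompleteSpace HA]
    {HB : Type*} [NormedAddCommGroup HB] [InnerProductSpace ℂ HB] [CompleteSpace HB]
    (A : X →ₗ.[ℂ] CDual X) (hsaA : IsSelfAdjointOp A) (hposA : IsPositiveOp A)
    (B : X →ₗ.[ℂ] CDual X) (hsaB : IsSelfAdjointOp B) (hposB : IsPositiveOp B)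
    (ΦA : A.domain → HA) (hΦAdense : DenseRange ΦA)
    (hΦA : ∀ x y : A.domain, ⟪ΦA y, ΦA x⟫_ℂ = A x (y : X))
    (JA : HA →ₗ.[ℂ] CDual X)
    (hJAdom : ∀ h : HA, h ∈ JA.domain ↔ h ∈ Set.range ΦA)
    (hJAval : ∀ (x : A.domain) (hh : ΦA x ∈ JA.domain), JA ⟨ΦA x, hh⟩ = A x)
    (SA : X →ₗ.[ℂ] HA)
    (hSAdom : ∀ y : X, y ∈ SA.domain ↔
      ∃ k : HA, ∀ h : JA.domain, JA h y = ⟪k, (h : HA)⟫_ℂ)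
    (hSAval : ∀ (y : SA.domain) (h : JA.domain), JA h (y : X) = ⟪SA y, (h : HA)⟫_ℂ)
    (ΦB : B.domain → HB) (hΦBdense : DenseRange ΦB)
    (hΦB : ∀ x y : B.domain, ⟪ΦB y, ΦB x⟫_ℂ = B x (y : X))
    (JB : HB →ₗ.[ℂ] CDual X)
    (hJBdom : ∀ h : HB, h ∈ JB.domain ↔ h ∈ Set.range ΦB)
    (hJBval : ∀ (x : B.domain) (hh : ΦB x ∈ JB.domain), JB ⟨ΦB x, hh⟩ = B x)
    (SB : X →ₗ.[ℂ] HB)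
    (hSBdom : ∀ y : X, y ∈ SB.domain ↔
      ∃ k : HB, ∀ h : JB.domain, JB h y = ⟪k, (h : HB)⟫_ℂ)
    (hSBval : ∀ (y : SB.domain) (h : JB.domain), JB h (y : X) = ⟪SB y, (h : HB)⟫_ℂ)
    (hAgeB : (SA.domain : Set X) ⊆ (SB.domain : Set X))
    (hAgeB' : ∀ (y : X) (hyA : y ∈ SA.domain) (hyB : y ∈ SB.domain),
      ‖SB ⟨y, hyB⟩‖ ^ 2 ≤ ‖SA ⟨y, hyA⟩‖ ^ 2)
    (hBgeA : (SB.domain : Set X) ⊆ (SA.domain : Set X))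
    (hBgeA' : ∀ (y : X) (hyB : y ∈ SB.domain) (hyA : y ∈ SA.domain),
      ‖SA ⟨y, hyA⟩‖ ^ 2 ≤ ‖SB ⟨y, hyB⟩‖ ^ 2) :
    A = B :=
  statement11_general A hsaA B hsaB ΦA hΦAdense hΦA JA hJAdom hJAval SA hSAdom hSAval ΦB hΦBdense
    hΦB JB hJBdom hJBval SB hSBdom hSBval hAgeB hAgeB' hBgeA hBgeA'
end
end

section
/- If a is a densely defined positive operator from X to X* with positive lower bound, then its Friedrichs extension A_F is the largest positive self-adjoint extension of a with respect to the order A ≥ B iff dom J_A* ⊆ dom J_B* and [J_A* y]² ≥ [J_B* y]² for y ∈ dom J_A*; specifically, for any positive self-adjoint extension A of a, dom J_F* ⊆ dom J_A* and [J_F* x]_F = [J_A* x]_A for x ∈ dom J_F*. -/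
open scoped ComplexConjugate ComplexOrder InnerProductSpace
noncomputable section

private lemma norm_eq_of_inner_eq' {E F : Type*} [NormedAddCommGroup E] [InnerProductSpace ℂ E]
    [NormedAddCommGroup F] [InnerProductSpace ℂ F] {e : E} {f : F}
    (h : ⟪e, e⟫_ℂ = ⟪f, f⟫_ℂ) : ‖e‖ = ‖f‖ := by
  have h1 : ‖e‖ ^ 2 = ‖f‖ ^ 2 := by
    rw [← inner_self_eq_norm_sq (𝕜 := ℂ) e, ← inner_self_eq_norm_sq (𝕜 := ℂ) f, h]
  nlinarith [norm_nonneg e, norm_nonneg f]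

private lemma dist_eq_of_inner_eq' {E F : Type*} [NormedAddCommGroup E] [InnerProductSpace ℂ E]
    [NormedAddCommGroup F] [InnerProductSpace ℂ F] {e1 e2 : E} {f1 f2 : F}
    (h11 : ⟪e1, e1⟫_ℂ = ⟪f1, f1⟫_ℂ) (h12 : ⟪e1, e2⟫_ℂ = ⟪f1, f2⟫_ℂ)
    (h22 : ⟪e2, e2⟫_ℂ = ⟪f2, f2⟫_ℂ) : ‖e1 - e2‖ = ‖f1 - f2‖ := by
  have h1 : ‖e1 - e2‖ ^ 2 = ‖f1 - f2‖ ^ 2 := by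
    rw [norm_sub_sq (𝕜 := ℂ), norm_sub_sq (𝕜 := ℂ),
      ← inner_self_eq_norm_sq (𝕜 := ℂ) e1, ← inner_self_eq_norm_sq (𝕜 := ℂ) e2,
      ← inner_self_eq_norm_sq (𝕜 := ℂ) f1, ← inner_self_eq_norm_sq (𝕜 := ℂ) f2,
      h11, h12, h22]
  nlinarith [norm_nonneg (e1 - e2), norm_nonneg (f1 - f2)]

/-- a densely defined positive operator from X to X* with lower bound
γ > 0; A_F its Friedrichs extension (the operator associated, via the
representation theorem, with the completion H of (dom a, t_a), embedded in X by
ι with ι (φ x) = x).  For any positive self-adjoint extension A of a, with the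
factorizations A_F = J_F J_F* and A = J_A J_A* through the completions H_F, H_A of
ran A_F, ran A ([Ax,Ay] = (Ax,y)), one has dom J_F* ⊆ dom J_A* and
[J_F* x]_F = [J_A* x]_A for x ∈ dom J_F*; that is, A_F is the largest positive
self-adjoint extension of a in the order of Statement 11. -/
theorem statement12
    {X : Type*} [NormedAddCommGroup X] [NormedSpace ℂ X] [CompleteSpace X]
    (a : X →ₗ.[ℂ] CDual X) (hdense : Dense (a.domain : Set X))
    (γ : ℝ) (hγ : 0 < γ)
    (hlb : ∀ x : a.domain, (↑(γ * ‖(x : X)‖ ^ 2) : ℂ) ≤ a x (x : X))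
    {H : Type*} [NormedAddCommGroup H] [InnerProductSpace ℂ H] [CompleteSpace H]
    (φ : a.domain →ₗ[ℂ] H) (hφdense : DenseRange φ)
    (hφ : ∀ x y : a.domain, ⟪φ y, φ x⟫_ℂ = a x (y : X))
    (ι : H →L[ℂ] X) (hιinj : Function.Injective ι)
    (hι : ∀ x : a.domain, ι (φ x) = (x : X))
    (AF : X →ₗ.[ℂ] CDual X) (hext : a ≤ AF)
    (hAFdom : ∀ x : X, x ∈ AF.domain ↔
      ∃ (hx : H) (z : CDual X), ι hx = x ∧ ∀ y : H, ⟪y, hx⟫_ℂ = z (ι y))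
    (hAFval : ∀ (x : AF.domain) (hx : H), ι hx = (x : X) →
      ∀ y : H, ⟪y, hx⟫_ℂ = AF x (ι y))
    {HF : Type*} [NormedAddCommGroup HF] [InnerProductSpace ℂ HF] [CompleteSpace HF]
    {HA : Type*} [NormedAddCommGroup HA] [InnerProductSpace ℂ HA] [CompleteSpace HA]
    (ΦF : AF.domain → HF) (hΦFdense : DenseRange ΦF)
    (hΦF : ∀ x y : AF.domain, ⟪ΦF y, ΦF x⟫_ℂ = AF x (y : X))
    (JF : HF →ₗ.[ℂ] CDual X)
    (hJFdom : ∀ h : HF, h ∈ JF.domain ↔ h ∈ Set.range ΦF)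
    (hJFval : ∀ (x : AF.domain) (hh : ΦF x ∈ JF.domain), JF ⟨ΦF x, hh⟩ = AF x)
    (SF : X →ₗ.[ℂ] HF)
    (hSFdom : ∀ y : X, y ∈ SF.domain ↔
      ∃ k : HF, ∀ h : JF.domain, JF h y = ⟪k, (h : HF)⟫_ℂ)
    (hSFval : ∀ (y : SF.domain) (h : JF.domain), JF h (y : X) = ⟪SF y, (h : HF)⟫_ℂ)
    (A : X →ₗ.[ℂ] CDual X) (hsaA : IsSelfAdjointOp A) (hposA : IsPositiveOp A)
    (hextA : a ≤ A)
    (ΦA : A.domain → HA) (hΦAdense : DenseRange ΦA)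
    (hΦA : ∀ x y : A.domain, ⟪ΦA y, ΦA x⟫_ℂ = A x (y : X))
    (JA : HA →ₗ.[ℂ] CDual X)
    (hJAdom : ∀ h : HA, h ∈ JA.domain ↔ h ∈ Set.range ΦA)
    (hJAval : ∀ (x : A.domain) (hh : ΦA x ∈ JA.domain), JA ⟨ΦA x, hh⟩ = A x)
    (SA : X →ₗ.[ℂ] HA)
    (hSAdom : ∀ y : X, y ∈ SA.domain ↔
      ∃ k : HA, ∀ h : JA.domain, JA h y = ⟪k, (h : HA)⟫_ℂ)
    (hSAval : ∀ (y : SA.domain) (h : JA.domain), JA h (y : X) = ⟪SA y, (h : HA)⟫_ℂ)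
 :
    (SF.domain : Set X) ⊆ (SA.domain : Set X) ∧
      ∀ (y : X) (hyF : y ∈ SF.domain) (hyA : y ∈ SA.domain),
        ‖SF ⟨y, hyF⟩‖ ^ 2 = ‖SA ⟨y, hyA⟩‖ ^ 2 := by

  classical
  open Filter Topology in
  -- embeddings of dom a into dom AF and dom A
  have memF : ∀ u : a.domain, (u : X) ∈ AF.domain := fun u => hext.1 u.2
  have memA : ∀ u : a.domain, (u : X) ∈ A.domain := fun u => hextA.1 u.2
  let eF : a.domain → AF.domain := fun u => ⟨u, memF u⟩
  let eA : a.domain → A.domain := fun u => ⟨u, memA u⟩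
  have haF : ∀ u : a.domain, a u = AF (eF u) := fun u => hext.2 rfl
  have haA : ∀ u : a.domain, a u = A (eA u) := fun u => hextA.2 rfl
  have hFF : ∀ u v : a.domain, ⟪ΦF (eF u), ΦF (eF v)⟫_ℂ = a v (u : X) := by
    intro u v
    rw [hΦF (eF v) (eF u), ← haF v]
  have hAA : ∀ u v : a.domain, ⟪ΦA (eA u), ΦA (eA v)⟫_ℂ = a v (u : X) := by
    intro u v
    rw [hΦA (eA v) (eA u), ← haA v]
  have hsym : ∀ u v : a.domain, a u (v : X) = starRingEnd ℂ (a v (u : X)) := by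
    intro u v
    rw [haA u, haA v]
    exact hsaA.2.1 (eA u) (eA v)
  have hre : ∀ u v : a.domain, (a v ((u : X))).re = (a u ((v : X))).re := by
    intro u v
    rw [hsym v u]
    exact Complex.conj_re _
  have hdistFA : ∀ u v : a.domain, ‖ΦF (eF u) - ΦF (eF v)‖ = ‖ΦA (eA u) - ΦA (eA v)‖ := by
    intro u v
    exact dist_eq_of_inner_eq' (by rw [hFF, hAA]) (by rw [hFF, hAA]) (by rw [hFF, hAA])
  have hnormFA : ∀ u : a.domain, ‖ΦF (eF u)‖ = ‖ΦA (eA u)‖ := by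
    intro u
    exact norm_eq_of_inner_eq' (by rw [hFF, hAA])
  have hlow : ∀ u v : a.domain,
      γ * ‖(u : X) - (v : X)‖ ^ 2 ≤ ‖ΦF (eF u) - ΦF (eF v)‖ ^ 2 := by
    intro u v
    have h := (Complex.le_def.mp (hlb (u - v))).1
    have hcoe : ((u - v : a.domain) : X) = (u : X) - (v : X) := rfl
    have hexp : (a (u - v)) ((u - v : a.domain) : X)
        = a u (u : X) - a u (v : X) - (a v (u : X) - a v (v : X)) := by
      rw [a.map_sub u v, hcoe, ContinuousLinearMap.sub_apply, map_sub, map_sub]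
    have hnorm : ‖ΦF (eF u) - ΦF (eF v)‖ ^ 2
        = (a u ((u : X))).re - 2 * (a v ((u : X))).re + (a v ((v : X))).re := by
      rw [norm_sub_sq (𝕜 := ℂ), ← inner_self_eq_norm_sq (𝕜 := ℂ) (ΦF (eF u)),
        ← inner_self_eq_norm_sq (𝕜 := ℂ) (ΦF (eF v)), hFF, hFF, hFF]
      simp only [RCLike.re_to_complex]
    rw [hexp] at h
    simp only [Complex.sub_re, Complex.ofReal_re, hcoe] at h
    rw [hnorm]
    have h2 := hre u v
    linarith
  -- approximation of ΦF-vectors by vectors coming from dom a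
  have happrox : ∀ (v : AF.domain) (ε : ℝ), 0 < ε →
      ∃ u : a.domain, ‖ΦF (eF u) - ΦF v‖ < ε := by
    intro v ε hε
    obtain ⟨h0, z0, hι0, _⟩ := (hAFdom v).mp v.2
    obtain ⟨u, hu⟩ := (Metric.denseRange_iff.mp hφdense) h0 ε hε
    refine ⟨u, ?_⟩
    have hval := hAFval v h0 hι0
    have e11 : ⟪ΦF (eF u), ΦF (eF u)⟫_ℂ = ⟪φ u, φ u⟫_ℂ :=
      (hFF u u).trans (hφ u u).symm
    have e12 : ⟪ΦF (eF u), ΦF v⟫_ℂ = ⟪φ u, h0⟫_ℂ := by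
      have h1 : ((eF u : AF.domain) : X) = ι (φ u) := (hι u).symm
      rw [hΦF v (eF u), h1]
      exact (hval (φ u)).symm
    have e22 : ⟪ΦF v, ΦF v⟫_ℂ = ⟪h0, h0⟫_ℂ := by
      rw [hΦF v v, ← hι0]
      exact (hval h0).symm
    rw [dist_eq_of_inner_eq' e11 e12 e22, ← dist_eq_norm, dist_comm]
    exact hu
  -- the main statement, for a fixed y ∈ dom SF
  have key : ∀ (y : X) (hyF : y ∈ SF.domain),
      ∃ hyA : y ∈ SA.domain, ‖SF ⟨y, hyF⟩‖ = ‖SA ⟨y, hyA⟩‖ := by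
    intro y hyF
    set k : HF := SF ⟨y, hyF⟩ with hk
    have hky : ∀ v : AF.domain, AF v y = ⟪k, ΦF v⟫_ℂ := by
      intro v
      have hvmem : ΦF v ∈ JF.domain := (hJFdom (ΦF v)).mpr ⟨v, rfl⟩
      have h1 := hSFval ⟨y, hyF⟩ ⟨ΦF v, hvmem⟩
      rwa [hJFval v hvmem] at h1
    -- approximate k by ΦF (eF u)
    have hkapprox : ∀ ε : ℝ, 0 < ε → ∃ u : a.domain, ‖ΦF (eF u) - k‖ < ε := by
      intro ε hε
      obtain ⟨v, hv⟩ := (Metric.denseRange_iff.mp hΦFdense) k (ε / 2) (by positivity)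
      obtain ⟨u, hu⟩ := happrox v (ε / 2) (by positivity)
      refine ⟨u, ?_⟩
      calc ‖ΦF (eF u) - k‖ ≤ ‖ΦF (eF u) - ΦF v‖ + ‖ΦF v - k‖ := by
            have := norm_sub_le_norm_sub_add_norm_sub (ΦF (eF u)) (ΦF v) k
            exact this
        _ < ε / 2 + ε / 2 := by
            gcongr
            rw [← dist_eq_norm, dist_comm]
            exact hv
        _ = ε := by ring
    choose u hu using fun n : ℕ => hkapprox (1 / ((n : ℝ) + 1)) (by positivity)
    have hFk : Filter.Tendsto (fun n => ΦF (eF (u n))) Filter.atTop (nhds k) := by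
      rw [tendsto_iff_dist_tendsto_zero]
      apply squeeze_zero (fun n => dist_nonneg)
        (fun n => le_of_lt (by rw [dist_eq_norm]; exact hu n))
      exact tendsto_one_div_add_atTop_nhds_zero_nat
    have hcF : CauchySeq fun n => ΦF (eF (u n)) := hFk.cauchySeq
    have hcA : CauchySeq fun n => ΦA (eA (u n)) := by
      rw [Metric.cauchySeq_iff] at hcF ⊢
      intro ε hε
      obtain ⟨N, hN⟩ := hcF ε hε
      refine ⟨N, fun m hm n hn => ?_⟩
      have h1 := hN m hm n hn
      rwa [dist_eq_norm, hdistFA, ← dist_eq_norm] at h1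
    have hcX : CauchySeq fun n => ((u n : X)) := by
      rw [Metric.cauchySeq_iff] at hcF ⊢
      intro ε hε
      obtain ⟨N, hN⟩ := hcF (Real.sqrt γ * ε) (by positivity)
      refine ⟨N, fun m hm n hn => ?_⟩
      have h1 := hN m hm n hn
      rw [dist_eq_norm] at h1 ⊢
      have h2 := hlow (u m) (u n)
      have hnn := norm_nonneg (ΦF (eF (u m)) - ΦF (eF (u n)))
      have hsq : Real.sqrt γ ^ 2 = γ := Real.sq_sqrt hγ.le
      have hsn : (0:ℝ) ≤ Real.sqrt γ := Real.sqrt_nonneg γ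
      have h3 : ‖((u m : X)) - ((u n : X))‖ ^ 2 < ε ^ 2 := by nlinarith
      exact lt_of_pow_lt_pow_left₀ 2 hε.le h3
    obtain ⟨k', hk'⟩ := cauchySeq_tendsto_of_complete hcA
    obtain ⟨z, hz⟩ := cauchySeq_tendsto_of_complete hcX
    -- AF v z = ⟪k, ΦF v⟫ for all v
    have hkz : ∀ v : AF.domain, AF v z = ⟪k, ΦF v⟫_ℂ := by
      intro v
      have l1 : Filter.Tendsto (fun n => AF v ((u n : X))) Filter.atTop (nhds (AF v z)) :=
        ((AF v).continuous.tendsto z).comp hz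
      have l2 : Filter.Tendsto (fun n => ⟪ΦF (eF (u n)), ΦF v⟫_ℂ) Filter.atTop
          (nhds ⟪k, ΦF v⟫_ℂ) := hFk.inner tendsto_const_nhds
      have l3 : (fun n => AF v ((u n : X))) = fun n => ⟪ΦF (eF (u n)), ΦF v⟫_ℂ :=
        funext fun n => (hΦF v (eF (u n))).symm
      rw [l3] at l1
      exact tendsto_nhds_unique l1 l2
    -- z = y
    have hyz : y = z := by
      have hAFyz : ∀ v : AF.domain, AF v y = AF v z := fun v => (hky v).trans (hkz v).symm
      have hfyz : ∀ f : CDual X, f y = f z := by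
        intro f
        let ℓ' : H →ₗ[ℂ] ℂ :=
          { toFun := fun h => starRingEnd ℂ (f (ι h))
            map_add' := fun h1 h2 => by simp [map_add]
            map_smul' := fun c h => by simp [map_smul] }
        have hbound : ∀ h : H, ‖ℓ' h‖ ≤ (‖f‖ * ‖ι‖) * ‖h‖ := by
          intro h
          have : ‖ℓ' h‖ = ‖f (ι h)‖ := RCLike.norm_conj _
          rw [this]
          calc ‖f (ι h)‖ ≤ ‖f‖ * ‖ι h‖ := f.le_opNorm _
            _ ≤ ‖f‖ * (‖ι‖ * ‖h‖) := by
                have := ι.le_opNorm h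
                gcongr
            _ = (‖f‖ * ‖ι‖) * ‖h‖ := by ring
        let ℓ : H →L[ℂ] ℂ := LinearMap.mkContinuous ℓ' (‖f‖ * ‖ι‖) hbound
        let hx : H := (InnerProductSpace.toDual ℂ H).symm ℓ
        have hhx : ∀ h : H, ⟪h, hx⟫_ℂ = f (ι h) := by
          intro h
          have h1 : ⟪hx, h⟫_ℂ = ℓ h := InnerProductSpace.toDual_symm_apply
          have h2 : ℓ h = starRingEnd ℂ (f (ι h)) := rfl
          rw [← inner_conj_symm, h1, h2, Complex.conj_conj]
        have hmem : ι hx ∈ AF.domain := (hAFdom (ι hx)).mpr ⟨hx, f, rfl, fun h => hhx h⟩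
        have hval := hAFval ⟨ι hx, hmem⟩ hx rfl
        have hagree : ∀ h : H, AF ⟨ι hx, hmem⟩ (ι h) = f (ι h) :=
          fun h => (hval h).symm.trans (hhx h)
        have hfun : ((AF ⟨ι hx, hmem⟩ : CDual X) : X → ℂ) = (f : X → ℂ) := by
          apply Continuous.ext_on hdense (AF ⟨ι hx, hmem⟩).continuous f.continuous
          intro w hw
          have hwι : w = ι (φ ⟨w, hw⟩) := (hι ⟨w, hw⟩).symm
          show AF ⟨ι hx, hmem⟩ w = f w
          rw [hwι]
          exact hagree (φ ⟨w, hw⟩)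
        calc f y = AF ⟨ι hx, hmem⟩ y := (congrFun hfun y).symm
          _ = AF ⟨ι hx, hmem⟩ z := hAFyz _
          _ = f z := congrFun hfun z
      have hdual : ∀ g : StrongDual ℂ X, g (y - z) = 0 := by
        intro g
        let f' : X →ₛₗ[starRingEnd ℂ] ℂ :=
          { toFun := fun x => starRingEnd ℂ (g x)
            map_add' := fun x1 x2 => by simp [map_add]
            map_smul' := fun c x => by simp [map_smul] }
        have hbound : ∀ x : X, ‖f' x‖ ≤ ‖g‖ * ‖x‖ := by
          intro x
          have : ‖f' x‖ = ‖g x‖ := RCLike.norm_conj _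
          rw [this]
          exact g.le_opNorm x
        let f : CDual X := LinearMap.mkContinuous f' ‖g‖ hbound
        have h1 : f y = f z := hfyz f
        have h2 : starRingEnd ℂ (g y) = starRingEnd ℂ (g z) := h1
        have h3 : g y = g z := by
          have := congrArg (starRingEnd ℂ) h2
          simpa using this
        rw [map_sub, h3, sub_self]
      have : y - z = 0 := NormedSpace.eq_zero_of_forall_dual_eq_zero ℂ hdual
      exact sub_eq_zero.mp this
    have hzy : Filter.Tendsto (fun n => ((u n : X))) Filter.atTop (nhds y) := by
      rw [hyz]; exact hz
    -- A x y = ⟪k', ΦA x⟫ for all x ∈ dom A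
    have hk'A : ∀ x : A.domain, A x y = ⟪k', ΦA x⟫_ℂ := by
      intro x
      have l1 : Filter.Tendsto (fun n => A x ((u n : X))) Filter.atTop (nhds (A x y)) :=
        ((A x).continuous.tendsto y).comp hzy
      have l2 : Filter.Tendsto (fun n => ⟪ΦA (eA (u n)), ΦA x⟫_ℂ) Filter.atTop
          (nhds ⟪k', ΦA x⟫_ℂ) := hk'.inner tendsto_const_nhds
      have l3 : (fun n => A x ((u n : X))) = fun n => ⟪ΦA (eA (u n)), ΦA x⟫_ℂ :=
        funext fun n => (hΦA x (eA (u n))).symm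
      rw [l3] at l1
      exact tendsto_nhds_unique l1 l2
    -- y ∈ dom SA
    have hyA : y ∈ SA.domain := by
      refine (hSAdom y).mpr ⟨k', fun h => ?_⟩
      obtain ⟨x, hxh⟩ := (hJAdom h).mp h.2
      have hJAh : JA h = A x := by
        have heq : h = ⟨ΦA x, by rw [hxh]; exact h.2⟩ := Subtype.ext hxh.symm
        rw [heq]
        exact hJAval x _
      rw [hJAh, ← hxh]
      exact hk'A x
    -- SA y = k'
    have hSAk' : SA ⟨y, hyA⟩ = k' := by
      have horto : ∀ x : A.domain, ⟪SA ⟨y, hyA⟩ - k', ΦA x⟫_ℂ = 0 := by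
        intro x
        have hmemJ : ΦA x ∈ JA.domain := (hJAdom (ΦA x)).mpr ⟨x, rfl⟩
        have h1 := hSAval ⟨y, hyA⟩ ⟨ΦA x, hmemJ⟩
        rw [hJAval x hmemJ] at h1
        rw [inner_sub_left, ← h1, ← hk'A x, sub_self]
      have hfun : (fun h : HA => ⟪SA ⟨y, hyA⟩ - k', h⟫_ℂ) = fun _ => (0 : ℂ) := by
        apply Continuous.ext_on hΦAdense
          (Continuous.inner continuous_const continuous_id) continuous_const
        rintro h ⟨x, rfl⟩
        exact horto x
      have h2 := congrFun hfun (SA ⟨y, hyA⟩ - k')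
      have h3 : SA ⟨y, hyA⟩ - k' = 0 := inner_self_eq_zero.mp h2
      exact sub_eq_zero.mp h3
    -- norms
    have hknorm : ‖k‖ = ‖k'‖ := by
      have l1 : Filter.Tendsto (fun n => ‖ΦF (eF (u n))‖) Filter.atTop (nhds ‖k‖) := hFk.norm
      have l2 : Filter.Tendsto (fun n => ‖ΦA (eA (u n))‖) Filter.atTop (nhds ‖k'‖) := hk'.norm
      have l3 : (fun n => ‖ΦF (eF (u n))‖) = fun n => ‖ΦA (eA (u n))‖ :=
        funext fun n => hnormFA (u n)
      rw [l3] at l1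
      exact tendsto_nhds_unique l1 l2
    exact ⟨hyA, by rw [hSAk', ← hknorm]⟩
  constructor
  · intro y hy
    obtain ⟨hyA, _⟩ := key y hy
    exact hyA
  · intro y hyF hyA
    obtain ⟨hyA', h⟩ := key y hyF
    rw [h]
end
end

section
/- In the Friedrichs construction, dom a is a core for J_F*, i.e. the closure of the restriction of J_F* to dom a equals J_F*. -/
open scoped ComplexConjugate ComplexOrder InnerProductSpace
noncomputable section

/-!
Here `ΦF z` plays the role of `A_F z` in `H_F` and `SF` that of `J_F*`. If `h₁, h₂ ∈ H` lift
`z₁, z₂ ∈ dom A_F` (that is, `ι hᵢ = zᵢ`), then `⟪ΦF z₁, ΦF z₂⟫ = A_F z₂ z₁ = ⟪h₁, h₂⟫`, so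
passing to lifts is isometric. As `φ (dom a)` is dense in `H`, `ΦF (dom a)` is therefore dense
in `H_F`: pick `xₙ ∈ dom a` with `ΦF xₙ → J_F* y`. Then `φ xₙ` is Cauchy in `H`, with limit `g`
say, and `xₙ = ι (φ xₙ) → ι g` in `X`. Finally `ι g = y`: both have the same pairing with every
`A_F z`, since `A_F z xₙ = ⟪ΦF xₙ, ΦF z⟫ → ⟪J_F* y, ΦF z⟫ = A_F z y`, and the functionals `A_F z`
exhaust `X*` (Riesz representation in `H` and density of `ι H` in `X`).
-/

open Filter Topology

theorem DenseRange.exists_seq_tendsto {α β : Type*} [TopologicalSpace β] [FrechetUrysohnSpace β]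
    {f : α → β} (hf : DenseRange f) (y : β) :
    ∃ u : ℕ → α, Tendsto (fun n => f (u n)) atTop (𝓝 y) := by
  obtain ⟨v, hv, hvy⟩ := mem_closure_iff_seq_limit.1 (hf y)
  choose u hu using hv
  exact ⟨u, by simpa only [hu] using hvy⟩

section InnerProduct

variable {𝕜 E F : Type*} [RCLike 𝕜] [NormedAddCommGroup E] [InnerProductSpace 𝕜 E]
  [NormedAddCommGroup F] [InnerProductSpace 𝕜 F]

theorem dist_eq_dist_of_inner_eq {x y : E} {x' y' : F} (hxx : ⟪x, x⟫_𝕜 = ⟪x', x'⟫_𝕜)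
    (hxy : ⟪x, y⟫_𝕜 = ⟪x', y'⟫_𝕜) (hyy : ⟪y, y⟫_𝕜 = ⟪y', y'⟫_𝕜) :
    dist x y = dist x' y' := by
  have hyx : ⟪y, x⟫_𝕜 = ⟪y', x'⟫_𝕜 := by rw [← inner_conj_symm, hxy, inner_conj_symm]
  have hsq : dist x y ^ 2 = dist x' y' ^ 2 := by
    rw [dist_eq_norm, dist_eq_norm, @norm_sq_eq_re_inner 𝕜, @norm_sq_eq_re_inner 𝕜,
      inner_sub_sub_self, inner_sub_sub_self, hxx, hxy, hyx, hyy]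
  exact (pow_left_inj₀ dist_nonneg dist_nonneg two_ne_zero).1 hsq

theorem exists_inner_eq_of_conjLinear_s13 [CompleteSpace E] (w : E →SL[starRingEnd 𝕜] 𝕜) :
    ∃ h : E, ∀ v : E, ⟪v, h⟫_𝕜 = w v := by
  refine ⟨(InnerProductSpace.toDual 𝕜 E).symm ((starL 𝕜).toContinuousLinearMap.comp w),
    fun v => ?_⟩
  rw [← inner_conj_symm, InnerProductSpace.toDual_symm_apply]
  simp

end InnerProduct

theorem eq_of_forall_conjLinear_apply_eq {𝕜 X : Type*} [RCLike 𝕜] [NormedAddCommGroup X]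
    [NormedSpace 𝕜 X] {x y : X} (h : ∀ w : X →SL[starRingEnd 𝕜] 𝕜, w x = w y) : x = y := by
  refine (SeparatingDual.eq_iff_forall_dual_eq (R := 𝕜)).2 fun f => ?_
  simpa using congrArg (starRingEnd 𝕜) (h ((starL 𝕜).toContinuousLinearMap.comp f))

theorem CauchySeq.of_dist_eq {α β γ : Type*} [PseudoMetricSpace α] [PseudoMetricSpace β]
    [Nonempty γ] [SemilatticeSup γ] {f : γ → α} {g : γ → β} (hf : CauchySeq f)
    (hfg : ∀ m n, dist (g m) (g n) = dist (f m) (f n)) : CauchySeq g :=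
  Metric.cauchySeq_iff.2 fun ε hε => (Metric.cauchySeq_iff.1 hf ε hε).imp
    fun _ hN m hm n hn => (hfg m n).trans_lt (hN m hm n hn)

namespace Friedrichs

variable {X H HF : Type*} [NormedAddCommGroup X] [NormedSpace ℂ X]
  [NormedAddCommGroup H] [InnerProductSpace ℂ H] [NormedAddCommGroup HF] [InnerProductSpace ℂ HF]
  {ι : H →L[ℂ] X} {AF : X →ₗ.[ℂ] CDual X} {ΦF : AF.domain → HF}

theorem inner_eq_of_lift (hΦF : ∀ x y : AF.domain, ⟪ΦF y, ΦF x⟫_ℂ = AF x (y : X))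
    (hAFval : ∀ (x : AF.domain) (hx : H), ι hx = (x : X) →
      ∀ y : H, ⟪y, hx⟫_ℂ = AF x (ι y))
    {z₁ z₂ : AF.domain} {h₁ h₂ : H} (hz₁ : ι h₁ = z₁) (hz₂ : ι h₂ = z₂) :
    ⟪ΦF z₁, ΦF z₂⟫_ℂ = ⟪h₁, h₂⟫_ℂ := by
  rw [hΦF, ← hz₁, hAFval z₂ h₂ hz₂]

theorem dist_eq_of_lift (hΦF : ∀ x y : AF.domain, ⟪ΦF y, ΦF x⟫_ℂ = AF x (y : X))
    (hAFval : ∀ (x : AF.domain) (hx : H), ι hx = (x : X) →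
      ∀ y : H, ⟪y, hx⟫_ℂ = AF x (ι y))
    {z₁ z₂ : AF.domain} {h₁ h₂ : H} (hz₁ : ι h₁ = z₁) (hz₂ : ι h₂ = z₂) :
    dist (ΦF z₁) (ΦF z₂) = dist h₁ h₂ :=
  dist_eq_dist_of_inner_eq (inner_eq_of_lift hΦF hAFval hz₁ hz₁)
    (inner_eq_of_lift hΦF hAFval hz₁ hz₂) (inner_eq_of_lift hΦF hAFval hz₂ hz₂)

theorem denseRange_comp_inclusion {a : X →ₗ.[ℂ] CDual X} (hext : a ≤ AF) {φ : a.domain → H}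
    (hφdense : DenseRange φ) (hι : ∀ x : a.domain, ι (φ x) = (x : X))
    (hlift : ∀ z : AF.domain, ∃ h : H, ι h = z) (hΦFdense : DenseRange ΦF)
    (hΦF : ∀ x y : AF.domain, ⟪ΦF y, ΦF x⟫_ℂ = AF x (y : X))
    (hAFval : ∀ (x : AF.domain) (hx : H), ι hx = (x : X) →
      ∀ y : H, ⟪y, hx⟫_ℂ = AF x (ι y)) :
    DenseRange fun x : a.domain => ΦF (Submodule.inclusion hext.1 x) := by
  rw [DenseRange, ← dense_closure]
  refine hΦFdense.mono ?_
  rintro _ ⟨z, rfl⟩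
  obtain ⟨h, hz⟩ := hlift z
  refine Metric.mem_closure_iff.2 fun ε hε => ?_
  obtain ⟨x, hx⟩ := Metric.denseRange_iff.1 hφdense h ε hε
  exact ⟨_, ⟨x, rfl⟩, by rwa [dist_eq_of_lift hΦF hAFval hz (hι x)]⟩

variable {JF : HF →ₗ.[ℂ] CDual X} {SF : X →ₗ.[ℂ] HF}

theorem inner_adjoint_eq_apply (hJFdom : ∀ h : HF, h ∈ JF.domain ↔ h ∈ Set.range ΦF)
    (hJFval : ∀ (x : AF.domain) (hh : ΦF x ∈ JF.domain), JF ⟨ΦF x, hh⟩ = AF x)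
    (hSFval : ∀ (y : SF.domain) (h : JF.domain), JF h (y : X) = ⟪SF y, (h : HF)⟫_ℂ)
    (y : SF.domain) (z : AF.domain) : ⟪SF y, ΦF z⟫_ℂ = AF z y := by
  have hz : ΦF z ∈ JF.domain := (hJFdom _).2 ⟨z, rfl⟩
  rw [← hSFval y ⟨ΦF z, hz⟩, hJFval z hz]

theorem adjoint_eq_of_mem (hΦFdense : DenseRange ΦF)
    (hΦF : ∀ x y : AF.domain, ⟪ΦF y, ΦF x⟫_ℂ = AF x (y : X))
    (hJFdom : ∀ h : HF, h ∈ JF.domain ↔ h ∈ Set.range ΦF)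
    (hJFval : ∀ (x : AF.domain) (hh : ΦF x ∈ JF.domain), JF ⟨ΦF x, hh⟩ = AF x)
    (hSFval : ∀ (y : SF.domain) (h : JF.domain), JF h (y : X) = ⟪SF y, (h : HF)⟫_ℂ)
    (z : AF.domain) (hz : (z : X) ∈ SF.domain) : SF ⟨z, hz⟩ = ΦF z :=
  hΦFdense.eq_of_inner_left ℂ fun w => by
    rw [inner_adjoint_eq_apply hJFdom hJFval hSFval, hΦF]

theorem tendsto_apply_of_tendsto_adjoint
    (hΦF : ∀ x y : AF.domain, ⟪ΦF y, ΦF x⟫_ℂ = AF x (y : X))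
    (hJFdom : ∀ h : HF, h ∈ JF.domain ↔ h ∈ Set.range ΦF)
    (hJFval : ∀ (x : AF.domain) (hh : ΦF x ∈ JF.domain), JF ⟨ΦF x, hh⟩ = AF x)
    (hSFval : ∀ (y : SF.domain) (h : JF.domain), JF h (y : X) = ⟪SF y, (h : HF)⟫_ℂ)
    {y : SF.domain} {u : ℕ → AF.domain} (hu : Tendsto (fun n => ΦF (u n)) atTop (𝓝 (SF y)))
    (z : AF.domain) : Tendsto (fun n => AF z (u n)) atTop (𝓝 (AF z y)) := by
  rw [← inner_adjoint_eq_apply hJFdom hJFval hSFval]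
  simpa only [hΦF] using hu.inner (𝕜 := ℂ) (tendsto_const_nhds (x := ΦF z))

theorem exists_apply_eq [CompleteSpace H] (hιdense : DenseRange ι)
    (hAFdom : ∀ x : X, x ∈ AF.domain ↔
      ∃ (hx : H) (z : CDual X), ι hx = x ∧ ∀ y : H, ⟪y, hx⟫_ℂ = z (ι y))
    (hAFval : ∀ (x : AF.domain) (hx : H), ι hx = (x : X) →
      ∀ y : H, ⟪y, hx⟫_ℂ = AF x (ι y))
    (w : CDual X) : ∃ z : AF.domain, AF z = w := by
  obtain ⟨h, hh⟩ := exists_inner_eq_of_conjLinear_s13 (w.comp ι)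
  have hmem : ι h ∈ AF.domain := (hAFdom _).2 ⟨h, w, rfl, hh⟩
  refine ⟨⟨ι h, hmem⟩, DFunLike.coe_injective ?_⟩
  exact hιdense.equalizer (AF _).continuous w.continuous
    (funext fun v => (hAFval _ h rfl v).symm.trans (hh v))

theorem eq_of_forall_apply_eq [CompleteSpace H] (hιdense : DenseRange ι)
    (hAFdom : ∀ x : X, x ∈ AF.domain ↔
      ∃ (hx : H) (z : CDual X), ι hx = x ∧ ∀ y : H, ⟪y, hx⟫_ℂ = z (ι y))
    (hAFval : ∀ (x : AF.domain) (hx : H), ι hx = (x : X) →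
      ∀ y : H, ⟪y, hx⟫_ℂ = AF x (ι y))
    {p q : X} (h : ∀ z : AF.domain, AF z p = AF z q) : p = q :=
  eq_of_forall_conjLinear_apply_eq fun w => by
    obtain ⟨z, rfl⟩ := exists_apply_eq hιdense hAFdom hAFval w
    exact h z

end Friedrichs

theorem statement13_general
    {X : Type*} [NormedAddCommGroup X] [NormedSpace ℂ X]
    (a : X →ₗ.[ℂ] CDual X) (hdense : Dense (a.domain : Set X))
    {H : Type*} [NormedAddCommGroup H] [InnerProductSpace ℂ H] [CompleteSpace H]
    (φ : a.domain →ₗ[ℂ] H) (hφdense : DenseRange φ)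
    (ι : H →L[ℂ] X)
    (hι : ∀ x : a.domain, ι (φ x) = (x : X))
    (AF : X →ₗ.[ℂ] CDual X) (hext : a ≤ AF)
    (hAFdom : ∀ x : X, x ∈ AF.domain ↔
      ∃ (hx : H) (z : CDual X), ι hx = x ∧ ∀ y : H, ⟪y, hx⟫_ℂ = z (ι y))
    (hAFval : ∀ (x : AF.domain) (hx : H), ι hx = (x : X) →
      ∀ y : H, ⟪y, hx⟫_ℂ = AF x (ι y))
    {HF : Type*} [NormedAddCommGroup HF] [InnerProductSpace ℂ HF]
    (ΦF : AF.domain → HF) (hΦFdense : DenseRange ΦF)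
    (hΦF : ∀ x y : AF.domain, ⟪ΦF y, ΦF x⟫_ℂ = AF x (y : X))
    (JF : HF →ₗ.[ℂ] CDual X)
    (hJFdom : ∀ h : HF, h ∈ JF.domain ↔ h ∈ Set.range ΦF)
    (hJFval : ∀ (x : AF.domain) (hh : ΦF x ∈ JF.domain), JF ⟨ΦF x, hh⟩ = AF x)
    (SF : X →ₗ.[ℂ] HF)
    (hSFval : ∀ (y : SF.domain) (h : JF.domain), JF h (y : X) = ⟪SF y, (h : HF)⟫_ℂ)
    (hsub : ∀ x : a.domain, (x : X) ∈ SF.domain) :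
    ∀ y : SF.domain, ∃ u : ℕ → a.domain,
      Tendsto (fun n => ((u n : X))) atTop (nhds (y : X)) ∧
      Tendsto (fun n => SF ⟨(u n : X), hsub (u n)⟩) atTop (nhds (SF y)) := by
  intro y
  have hlift : ∀ z : AF.domain, ∃ h : H, ι h = z := fun z => by
    obtain ⟨h, -, hz, -⟩ := (hAFdom z).1 z.2
    exact ⟨h, hz⟩
  have hιdense : DenseRange ι :=
    hdense.mono fun x hx => ⟨φ ⟨x, hx⟩, hι ⟨x, hx⟩⟩
  obtain ⟨u, hu⟩ := (Friedrichs.denseRange_comp_inclusion hext hφdense hι hlift hΦFdense hΦF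
    hAFval).exists_seq_tendsto (SF y)
  obtain ⟨g, hg⟩ := cauchySeq_tendsto_of_complete (hu.cauchySeq.of_dist_eq fun m n =>
    (Friedrichs.dist_eq_of_lift hΦF hAFval (hι (u m)) (hι (u n))).symm)
  have hug : Tendsto (fun n => (u n : X)) atTop (𝓝 (ι g)) := by
    simpa only [Function.comp_def, hι] using (ι.continuous.tendsto g).comp hg
  have hgy : ι g = y := Friedrichs.eq_of_forall_apply_eq hιdense hAFdom hAFval fun z =>
    tendsto_nhds_unique (((AF z).continuous.tendsto _).comp hug)
      (Friedrichs.tendsto_apply_of_tendsto_adjoint hΦF hJFdom hJFval hSFval hu z)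
  refine ⟨u, hgy ▸ hug, hu.congr fun n => ?_⟩
  exact (Friedrichs.adjoint_eq_of_mem hΦFdense hΦF hJFdom hJFval hSFval _ _).symm

/-- In the Friedrichs construction for a densely defined positive
operator a with positive lower bound, dom a is a core for J_F*: every
y in dom J_F* is the limit in X of a sequence from dom a whose J_F*-images
converge to J_F* y in H_F; i.e. the closure of the restriction of J_F* to dom a
equals J_F*. -/
theorem statement13
    {X : Type*} [NormedAddCommGroup X] [NormedSpace ℂ X] [CompleteSpace X]
    (a : X →ₗ.[ℂ] CDual X) (hdense : Dense (a.domain : Set X))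
    (γ : ℝ) (hγ : 0 < γ)
    (hlb : ∀ x : a.domain, (↑(γ * ‖(x : X)‖ ^ 2) : ℂ) ≤ a x (x : X))
    {H : Type*} [NormedAddCommGroup H] [InnerProductSpace ℂ H] [CompleteSpace H]
    (φ : a.domain →ₗ[ℂ] H) (hφdense : DenseRange φ)
    (hφ : ∀ x y : a.domain, ⟪φ y, φ x⟫_ℂ = a x (y : X))
    (ι : H →L[ℂ] X) (hιinj : Function.Injective ι)
    (hι : ∀ x : a.domain, ι (φ x) = (x : X))
    (AF : X →ₗ.[ℂ] CDual X) (hext : a ≤ AF)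
    (hAFdom : ∀ x : X, x ∈ AF.domain ↔
      ∃ (hx : H) (z : CDual X), ι hx = x ∧ ∀ y : H, ⟪y, hx⟫_ℂ = z (ι y))
    (hAFval : ∀ (x : AF.domain) (hx : H), ι hx = (x : X) →
      ∀ y : H, ⟪y, hx⟫_ℂ = AF x (ι y))
    {HF : Type*} [NormedAddCommGroup HF] [InnerProductSpace ℂ HF] [CompleteSpace HF]
    (ΦF : AF.domain → HF) (hΦFdense : DenseRange ΦF)
    (hΦF : ∀ x y : AF.domain, ⟪ΦF y, ΦF x⟫_ℂ = AF x (y : X))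
    (JF : HF →ₗ.[ℂ] CDual X)
    (hJFdom : ∀ h : HF, h ∈ JF.domain ↔ h ∈ Set.range ΦF)
    (hJFval : ∀ (x : AF.domain) (hh : ΦF x ∈ JF.domain), JF ⟨ΦF x, hh⟩ = AF x)
    (SF : X →ₗ.[ℂ] HF)
    (hSFdom : ∀ y : X, y ∈ SF.domain ↔
      ∃ k : HF, ∀ h : JF.domain, JF h y = ⟪k, (h : HF)⟫_ℂ)
    (hSFval : ∀ (y : SF.domain) (h : JF.domain), JF h (y : X) = ⟪SF y, (h : HF)⟫_ℂ)
    (hsub : ∀ x : a.domain, (x : X) ∈ SF.domain) :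
    ∀ y : SF.domain, ∃ u : ℕ → a.domain,
      Tendsto (fun n => ((u n : X))) atTop (nhds (y : X)) ∧
      Tendsto (fun n => SF ⟨(u n : X), hsub (u n)⟩) atTop (nhds (SF y)) :=
  statement13_general a hdense φ hφdense ι hι AF hext hAFdom hAFval ΦF hΦFdense hΦF JF hJFdom hJFval
    SF hSFval hsub
end
end

section
/- Let A, B be positive self-adjoint operators from X to X* with positive lower bounds, and let J : H_A ⊕ H_B → X* be defined on {Ax ⊕ By} by J(Ax ⊕ By) = Ax + By. Then dom J* = dom J_A* ∩ dom J_B*, and for z ∈ dom A ∩ dom B, J* z = Az ⊕ Bz; consequently J** J* extends A + B. -/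
open scoped ComplexConjugate ComplexOrder InnerProductSpace
noncomputable section

lemma dense_inner_eq {H : Type*} [NormedAddCommGroup H] [InnerProductSpace ℂ H]
    {s : Set H} (hs : Dense s) {v w : H} (h : ∀ x ∈ s, ⟪v, x⟫_ℂ = ⟪w, x⟫_ℂ) : v = w := by
  have hz : ∀ x : H, ⟪v - w, x⟫_ℂ = 0 := by
    have hc : Continuous fun x : H => ⟪v - w, x⟫_ℂ := (innerSL ℂ (v - w)).continuous
    have heq : (fun x : H => ⟪v - w, x⟫_ℂ) = fun _ => (0 : ℂ) :=
      Continuous.ext_on hs hc continuous_const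
        (fun x hx => by simp [inner_sub_left, h x hx])
    intro x; exact congrFun heq x
  exact sub_eq_zero.mp (inner_self_eq_zero.mp (hz (v - w)))

/-- A, B positive self-adjoint operators from X to X* with positive
lower bounds, with factorizations A = J_A J_A*, B = J_B J_B* through H_A, H_B, and
J : H_A ⊕ H_B → X* defined on { Ax ⊕ By } by J (Ax ⊕ By) = Ax + By (the element
Ax of H_A being represented by ΦA x, etc.).  Then dom J* = dom J_A* ∩ dom J_B*;
for z ∈ dom A ∩ dom B one has J* z = Az ⊕ Bz; and consequently J** J* extends
A + B (on dom A ∩ dom B, J* z lies in dom J and J (J* z) = Az + Bz). -/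
theorem statement14
    {X : Type*} [NormedAddCommGroup X] [NormedSpace ℂ X] [CompleteSpace X]
    {HA : Type*} [NormedAddCommGroup HA] [InnerProductSpace ℂ HA] [CompleteSpace HA]
    {HB : Type*} [NormedAddCommGroup HB] [InnerProductSpace ℂ HB] [CompleteSpace HB]
    (A : X →ₗ.[ℂ] CDual X) (hsaA : IsSelfAdjointOp A)
    (B : X →ₗ.[ℂ] CDual X) (hsaB : IsSelfAdjointOp B)
    (γA γB : ℝ) (hγA : 0 < γA) (hγB : 0 < γB)
    (hlbA : ∀ x : A.domain, (↑(γA * ‖(x : X)‖ ^ 2) : ℂ) ≤ A x (x : X))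
    (hlbB : ∀ x : B.domain, (↑(γB * ‖(x : X)‖ ^ 2) : ℂ) ≤ B x (x : X))
    (ΦA : A.domain → HA) (hΦAdense : DenseRange ΦA)
    (hΦA : ∀ x y : A.domain, ⟪ΦA y, ΦA x⟫_ℂ = A x (y : X))
    (JA : HA →ₗ.[ℂ] CDual X)
    (hJAdom : ∀ h : HA, h ∈ JA.domain ↔ h ∈ Set.range ΦA)
    (hJAval : ∀ (x : A.domain) (hh : ΦA x ∈ JA.domain), JA ⟨ΦA x, hh⟩ = A x)
    (SA : X →ₗ.[ℂ] HA)
    (hSAdom : ∀ y : X, y ∈ SA.domain ↔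
      ∃ k : HA, ∀ h : JA.domain, JA h y = ⟪k, (h : HA)⟫_ℂ)
    (hSAval : ∀ (y : SA.domain) (h : JA.domain), JA h (y : X) = ⟪SA y, (h : HA)⟫_ℂ)
    (ΦB : B.domain → HB) (hΦBdense : DenseRange ΦB)
    (hΦB : ∀ x y : B.domain, ⟪ΦB y, ΦB x⟫_ℂ = B x (y : X))
    (JB : HB →ₗ.[ℂ] CDual X)
    (hJBdom : ∀ h : HB, h ∈ JB.domain ↔ h ∈ Set.range ΦB)
    (hJBval : ∀ (x : B.domain) (hh : ΦB x ∈ JB.domain), JB ⟨ΦB x, hh⟩ = B x)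
    (SB : X →ₗ.[ℂ] HB)
    (hSBdom : ∀ y : X, y ∈ SB.domain ↔
      ∃ k : HB, ∀ h : JB.domain, JB h y = ⟪k, (h : HB)⟫_ℂ)
    (hSBval : ∀ (y : SB.domain) (h : JB.domain), JB h (y : X) = ⟪SB y, (h : HB)⟫_ℂ)
    (J : (HA × HB) →ₗ.[ℂ] CDual X)
    (hJdom : ∀ p : HA × HB, p ∈ J.domain ↔
      ∃ (x : A.domain) (y : B.domain), p = (ΦA x, ΦB y))
    (hJval : ∀ (x : A.domain) (y : B.domain) (hp : (ΦA x, ΦB y) ∈ J.domain),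
      J ⟨(ΦA x, ΦB y), hp⟩ = A x + B y)
    (S : X →ₗ.[ℂ] (HA × HB))
    (hSdom : ∀ y : X, y ∈ S.domain ↔
      ∃ k : HA × HB, ∀ h : J.domain,
        J h y = ⟪k.1, (h : HA × HB).1⟫_ℂ + ⟪k.2, (h : HA × HB).2⟫_ℂ)
    (hSval : ∀ (y : S.domain) (h : J.domain),
      J h (y : X) = ⟪(S y).1, (h : HA × HB).1⟫_ℂ + ⟪(S y).2, (h : HA × HB).2⟫_ℂ)
 :
    (∀ y : X, y ∈ S.domain ↔ (y ∈ SA.domain ∧ y ∈ SB.domain)) ∧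
    (∀ (z : X) (hzA : z ∈ A.domain) (hzB : z ∈ B.domain) (hz : z ∈ S.domain),
      S ⟨z, hz⟩ = (ΦA ⟨z, hzA⟩, ΦB ⟨z, hzB⟩)) ∧
    (∀ (z : X) (hzA : z ∈ A.domain) (hzB : z ∈ B.domain) (hz : z ∈ S.domain),
      ∃ hJ : S ⟨z, hz⟩ ∈ J.domain,
        J ⟨S ⟨z, hz⟩, hJ⟩ = A ⟨z, hzA⟩ + B ⟨z, hzB⟩) := by
  -- basic facts
  have hA0 : ΦA 0 = 0 := by
    have h1 : ⟪ΦA 0, ΦA 0⟫_ℂ = A 0 (((0 : A.domain) : X)) := hΦA 0 0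
    rw [A.map_zero] at h1
    simpa [inner_self_eq_zero] using h1
  have hB0 : ΦB 0 = 0 := by
    have h1 : ⟪ΦB 0, ΦB 0⟫_ℂ = B 0 (((0 : B.domain) : X)) := hΦB 0 0
    rw [B.map_zero] at h1
    simpa [inner_self_eq_zero] using h1
  have memJ : ∀ (x : A.domain) (y : B.domain), (ΦA x, ΦB y) ∈ J.domain :=
    fun x y => (hJdom _).mpr ⟨x, y, rfl⟩
  have memJA : ∀ x : A.domain, ΦA x ∈ JA.domain := fun x => (hJAdom _).mpr ⟨x, rfl⟩
  have memJB : ∀ y : B.domain, ΦB y ∈ JB.domain := fun y => (hJBdom _).mpr ⟨y, rfl⟩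
  -- value of J on an arbitrary element of its domain
  have Jval' : ∀ (h : J.domain) (x : A.domain) (y : B.domain),
      (h : HA × HB) = (ΦA x, ΦB y) → J h = A x + B y := by
    intro h x y he
    have : h = ⟨(ΦA x, ΦB y), memJ x y⟩ := Subtype.ext he
    rw [this]; exact hJval x y _
  -- value of J z for z ∈ S.domain against special elements
  have key : ∀ (z : S.domain) (x : A.domain),
      A x (z : X) = ⟪(S z).1, ΦA x⟫_ℂ := by
    intro z x
    have h1 := hSval z ⟨(ΦA x, ΦB 0), memJ x 0⟩
    rw [Jval' ⟨(ΦA x, ΦB 0), memJ x 0⟩ x 0 rfl] at h1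
    simpa [B.map_zero, hB0] using h1
  have keyB : ∀ (z : S.domain) (y : B.domain),
      B y (z : X) = ⟪(S z).2, ΦB y⟫_ℂ := by
    intro z y
    have h1 := hSval z ⟨(ΦA 0, ΦB y), memJ 0 y⟩
    rw [Jval' ⟨(ΦA 0, ΦB y), memJ 0 y⟩ 0 y rfl] at h1
    simpa [A.map_zero, hA0] using h1
  -- Part 2 (proved first)
  have part2 : ∀ (z : X) (hzA : z ∈ A.domain) (hzB : z ∈ B.domain) (hz : z ∈ S.domain),
      S ⟨z, hz⟩ = (ΦA ⟨z, hzA⟩, ΦB ⟨z, hzB⟩) := by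
    intro z hzA hzB hz
    have h1 : (S ⟨z, hz⟩).1 = ΦA ⟨z, hzA⟩ := by
      apply dense_inner_eq hΦAdense
      rintro _ ⟨x, rfl⟩
      rw [← key ⟨z, hz⟩ x, hΦA x ⟨z, hzA⟩]
    have h2 : (S ⟨z, hz⟩).2 = ΦB ⟨z, hzB⟩ := by
      apply dense_inner_eq hΦBdense
      rintro _ ⟨y, rfl⟩
      rw [← keyB ⟨z, hz⟩ y, hΦB y ⟨z, hzB⟩]
    exact Prod.ext h1 h2
  refine ⟨?_, part2, ?_⟩
  · -- Part 1 : dom S = dom SA ∩ dom SB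
    intro y
    constructor
    · intro hy
      obtain ⟨k, hk⟩ := (hSdom y).mp hy
      constructor
      · refine (hSAdom y).mpr ⟨k.1, ?_⟩
        intro h
        obtain ⟨x, hx⟩ := (hJAdom (h : HA)).mp h.2
        have hh : h = ⟨ΦA x, memJA x⟩ := Subtype.ext hx.symm
        rw [hh, hJAval x (memJA x)]
        have h1 := hk ⟨(ΦA x, ΦB 0), memJ x 0⟩
        rw [Jval' ⟨(ΦA x, ΦB 0), memJ x 0⟩ x 0 rfl] at h1
        simpa [B.map_zero, hB0] using h1
      · refine (hSBdom y).mpr ⟨k.2, ?_⟩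
        intro h
        obtain ⟨x, hx⟩ := (hJBdom (h : HB)).mp h.2
        have hh : h = ⟨ΦB x, memJB x⟩ := Subtype.ext hx.symm
        rw [hh, hJBval x (memJB x)]
        have h1 := hk ⟨(ΦA 0, ΦB x), memJ 0 x⟩
        rw [Jval' ⟨(ΦA 0, ΦB x), memJ 0 x⟩ 0 x rfl] at h1
        simpa [A.map_zero, hA0] using h1
    · rintro ⟨hyA, hyB⟩
      refine (hSdom y).mpr ⟨(SA ⟨y, hyA⟩, SB ⟨y, hyB⟩), ?_⟩
      intro h
      obtain ⟨x, y', he⟩ := (hJdom (h : HA × HB)).mp h.2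
      rw [Jval' h x y' he]
      have hA1 : A x y = ⟪SA ⟨y, hyA⟩, ΦA x⟫_ℂ := by
        have := hSAval ⟨y, hyA⟩ ⟨ΦA x, memJA x⟩
        rwa [hJAval x (memJA x)] at this
      have hB1 : B y' y = ⟪SB ⟨y, hyB⟩, ΦB y'⟫_ℂ := by
        have := hSBval ⟨y, hyB⟩ ⟨ΦB y', memJB y'⟩
        rwa [hJBval y' (memJB y')] at this
      have he1 : (h : HA × HB).1 = ΦA x := by rw [he]
      have he2 : (h : HA × HB).2 = ΦB y' := by rw [he]
      simp [he1, he2, hA1, hB1]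
  · -- Part 3
    intro z hzA hzB hz
    have h2 := part2 z hzA hzB hz
    rw [h2]
    exact ⟨memJ _ _, hJval _ _ _⟩
end
end

section
/- Let A be a positive self-adjoint operator from X to X*, and E a bounded operator on X leaving dom A invariant with E* A ⊆ A E. Then the map Ê defined on ran A ⊆ H_A by Ê(Ax) := A(Ex) is well-defined and bounded, with [Ê(Ax), Ê(Ax)] ≤ r(E²) [Ax, Ax], where r(E²) is the spectral radius of E². -/
open scoped ComplexConjugate ComplexOrder InnerProductSpace ENNReal NNReal
noncomputable section

/-!
The map `u ↦ E u` on `dom A` is symmetric for `[·,·]`, since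
`[A(Eu), Av] = (Av)(Eu) = (A(Ev))(u) = [Au, A(Ev)]`. Symmetry alone gives well-definedness,
and it makes `[A(Eᵐx), A(Eⁿx)] = (Ax)(Eᵐ⁺ⁿx)` depend only on `m + n`. Writing `|·|` for the
norm of `H_A`, Cauchy–Schwarz then gives `|A(Eⁿx)|² ≤ |A(E²ⁿx)| |Ax|`, and iterating this along
powers of two, `|A(Ex)|^{2N} ≤ ‖Ax‖ ‖x‖ ‖(E²)ᴺ‖ |Ax|^{2N-2}` for `N = 2ᵏ`. Taking `N`-th roots,
Gelfand's formula `‖(E²)ᴺ‖^{1/N} → r(E²)` yields the bound.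
-/

open Filter Topology

section SymmetricMap

variable {𝕜 D H : Type*} [RCLike 𝕜] [NormedAddCommGroup H] [InnerProductSpace 𝕜 H]
  {Φ : D → H} {S : D → D}

theorem map_eq_map_of_inner_map_symm (hS : ∀ u v, ⟪Φ (S u), Φ v⟫_𝕜 = ⟪Φ u, Φ (S v)⟫_𝕜)
    {x y : D} (hxy : Φ x = Φ y) : Φ (S x) = Φ (S y) := by
  have key : ∀ w, ⟪Φ (S x), Φ (S w)⟫_𝕜 = ⟪Φ (S y), Φ (S w)⟫_𝕜 := fun w => by
    rw [hS, hS, hxy]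
  have hsub : ⟪Φ (S x) - Φ (S y), Φ (S x) - Φ (S y)⟫_𝕜 = 0 := by
    rw [inner_sub_left, inner_sub_right, inner_sub_right, key x, key y]
    ring
  exact sub_eq_zero.mp (inner_self_eq_zero.mp hsub)

theorem inner_iterate_eq_inner_iterate_add
    (hS : ∀ u v, ⟪Φ (S u), Φ v⟫_𝕜 = ⟪Φ u, Φ (S v)⟫_𝕜) (x : D) (m n : ℕ) :
    ⟪Φ (S^[m] x), Φ (S^[n] x)⟫_𝕜 = ⟪Φ (S^[m + n] x), Φ x⟫_𝕜 := by
  induction n generalizing m with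
  | zero => rfl
  | succ n ih =>
    rw [Function.iterate_succ_apply', ← hS, ← Function.iterate_succ_apply' S m, ih,
      Nat.succ_add_eq_add_succ]

theorem nnnorm_iterate_sq_eq (hS : ∀ u v, ⟪Φ (S u), Φ v⟫_𝕜 = ⟪Φ u, Φ (S v)⟫_𝕜)
    (x : D) (n : ℕ) : ‖Φ (S^[n] x)‖₊ ^ 2 = ‖⟪Φ (S^[2 * n] x), Φ x⟫_𝕜‖₊ := by
  rw [two_mul, ← inner_iterate_eq_inner_iterate_add hS, inner_self_eq_norm_sq_to_K,
    nnnorm_pow]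
  simp only [nnnorm_algebraMap', nnnorm_norm]

theorem nnnorm_iterate_sq_le (hS : ∀ u v, ⟪Φ (S u), Φ v⟫_𝕜 = ⟪Φ u, Φ (S v)⟫_𝕜)
    (x : D) (n : ℕ) : ‖Φ (S^[n] x)‖₊ ^ 2 ≤ ‖Φ (S^[2 * n] x)‖₊ * ‖Φ x‖₊ :=
  (nnnorm_iterate_sq_eq hS x n).trans_le (nnnorm_inner_le_nnnorm _ _)

theorem nnnorm_map_pow_two_pow_le (hS : ∀ u v, ⟪Φ (S u), Φ v⟫_𝕜 = ⟪Φ u, Φ (S v)⟫_𝕜)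
    (x : D) (k : ℕ) :
    ‖Φ (S x)‖₊ ^ 2 ^ k ≤ ‖Φ (S^[2 ^ k] x)‖₊ * ‖Φ x‖₊ ^ (2 ^ k - 1) := by
  induction k with
  | zero => simp
  | succ k ih =>
    have hk : 2 ^ (k + 1) - 1 = (2 ^ k - 1) * 2 + 1 := by
      have := Nat.one_le_two_pow (n := k); rw [pow_succ]; omega
    calc ‖Φ (S x)‖₊ ^ 2 ^ (k + 1) = (‖Φ (S x)‖₊ ^ 2 ^ k) ^ 2 := by
          rw [pow_succ, pow_mul]
      _ ≤ (‖Φ (S^[2 ^ k] x)‖₊ * ‖Φ x‖₊ ^ (2 ^ k - 1)) ^ 2 := by gcongr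
      _ = ‖Φ (S^[2 ^ k] x)‖₊ ^ 2 * ‖Φ x‖₊ ^ ((2 ^ k - 1) * 2) := by
          rw [mul_pow, pow_mul]
      _ ≤ ‖Φ (S^[2 * 2 ^ k] x)‖₊ * ‖Φ x‖₊ * ‖Φ x‖₊ ^ ((2 ^ k - 1) * 2) := by
          gcongr; exact nnnorm_iterate_sq_le hS x _
      _ = ‖Φ (S^[2 ^ (k + 1)] x)‖₊ * ‖Φ x‖₊ ^ (2 ^ (k + 1) - 1) := by
          rw [hk, pow_succ' 2 k, mul_assoc, ← pow_succ' ‖Φ x‖₊]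

end SymmetricMap

theorem NNReal.le_of_frequently_pow_le_mul_pow_sub_one {x y K : ℝ≥0}
    (h : ∃ᶠ n in atTop, x ^ n ≤ K * y ^ (n - 1)) : x ≤ y := by
  by_contra! hyx
  have hx : 0 < x := zero_le.trans_lt hyx
  have hlim : Tendsto (fun n => K * (y / x) ^ (n - 1)) atTop (𝓝 0) := by
    simpa using ((tendsto_pow_atTop_nhds_zero_of_lt_one
      ((div_lt_one hx).2 hyx)).comp (tendsto_sub_atTop_nat 1)).const_mul K
  refine hx.not_ge (ge_of_tendsto_of_frequently hlim ?_)
  refine (h.and_eventually (eventually_ne_atTop 0)).mono fun n ⟨hn, hn0⟩ => ?_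
  rw [div_pow, mul_div_assoc', le_div_iff₀ (pow_pos hx _), mul_pow_sub_one hn0]
  exact hn

section GelfandFormula

variable {𝒜 : Type*} [NormedRing 𝒜] [NormedAlgebra ℂ 𝒜] [CompleteSpace 𝒜]

theorem spectrum.spectralRadius_ne_top (a : 𝒜) : spectralRadius ℂ a ≠ ⊤ :=
  ne_top_of_le_ne_top (by simp [ENNReal.mul_eq_top])
    (spectrum.spectralRadius_le_pow_nnnorm_pow_one_div ℂ a 0)

theorem spectrum.eventually_nnnorm_pow_le_of_spectralRadius_lt {a : 𝒜} {ρ : ℝ≥0}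
    (hρ : spectralRadius ℂ a < ρ) : ∀ᶠ n in atTop, ‖a ^ n‖₊ ≤ ρ ^ n := by
  filter_upwards [(pow_nnnorm_pow_one_div_tendsto_nhds_spectralRadius a).eventually_le_const hρ,
    eventually_ne_atTop 0] with n hn hn0
  rw [one_div, ENNReal.rpow_inv_le_iff (by positivity), ENNReal.rpow_natCast] at hn
  exact_mod_cast hn

theorem spectrum.coe_le_spectralRadius_mul_of_frequently_pow_le (a : 𝒜) {x y C : ℝ≥0}
    (h : ∃ᶠ n in atTop, x ^ n ≤ C * ‖a ^ n‖₊ * y ^ (n - 1)) :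
    (x : ℝ≥0∞) ≤ spectralRadius ℂ a * y := by
  lift spectralRadius ℂ a to ℝ≥0 using spectrum.spectralRadius_ne_top a with r hr
  have key : ∀ ρ ∈ Set.Ioi r, x ≤ ρ * y := fun ρ hρ => by
    refine NNReal.le_of_frequently_pow_le_mul_pow_sub_one (K := C * ρ) ?_
    have hnorm := eventually_nnnorm_pow_le_of_spectralRadius_lt (a := a)
      (hr ▸ ENNReal.coe_lt_coe.2 hρ)
    refine (h.and_eventually (hnorm.and (eventually_ne_atTop 0))).mono
      fun n ⟨hn, ha, hn0⟩ => hn.trans ?_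
    calc C * ‖a ^ n‖₊ * y ^ (n - 1) ≤ C * ρ ^ n * y ^ (n - 1) := by gcongr
      _ = C * ρ * (ρ * y) ^ (n - 1) := by rw [mul_pow, ← mul_pow_sub_one hn0 ρ]; ring
  have hlim : Tendsto (· * y) (𝓝[>] r) (𝓝 (r * y)) :=
    ((continuous_mul_const y).tendsto r).mono_left nhdsWithin_le_nhds
  exact_mod_cast ge_of_tendsto hlim (eventually_nhdsWithin_of_forall key)

end GelfandFormula

section DomainInvariant

variable {X HA : Type*} [NormedAddCommGroup X] [NormedSpace ℂ X]
  [NormedAddCommGroup HA] [InnerProductSpace ℂ HA]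
  {A : X →ₗ.[ℂ] CDual X} {Φ : A.domain → HA} {E : X →L[ℂ] X} {S : A.domain → A.domain}

theorem coe_iterate_eq_pow_apply (hSE : ∀ u, (S u : X) = E u) (n : ℕ) (x : A.domain) :
    (S^[n] x : X) = (E ^ n) x := by
  induction n with
  | zero => rfl
  | succ n ih =>
    rw [Function.iterate_succ_apply', hSE, ih, pow_succ']
    rfl

theorem inner_map_symm_of_comm (hΦ : ∀ x y : A.domain, ⟪Φ y, Φ x⟫_ℂ = A x (y : X))
    (hSE : ∀ u, (S u : X) = E u) (hcomm : ∀ (x : A.domain) (y : X), A x (E y) = A (S x) y)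
    (u v : A.domain) : ⟪Φ (S u), Φ v⟫_ℂ = ⟪Φ u, Φ (S v)⟫_ℂ := by
  rw [hΦ, hΦ, hSE, hcomm]

theorem nnnorm_iterate_sq_le_nnnorm_pow
    (hΦ : ∀ x y : A.domain, ⟪Φ y, Φ x⟫_ℂ = A x (y : X))
    (hSE : ∀ u, (S u : X) = E u) (hcomm : ∀ (x : A.domain) (y : X), A x (E y) = A (S x) y)
    (x : A.domain) (n : ℕ) :
    ‖Φ (S^[n] x)‖₊ ^ 2 ≤ ‖A x‖₊ * ‖(x : X)‖₊ * ‖(E.comp E) ^ n‖₊ := by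
  have hpow : (E.comp E) ^ n = E ^ (2 * n) := by rw [pow_mul, sq]; rfl
  calc ‖Φ (S^[n] x)‖₊ ^ 2 = ‖A x ((E ^ (2 * n)) x)‖₊ := by
        rw [nnnorm_iterate_sq_eq (inner_map_symm_of_comm hΦ hSE hcomm), hΦ,
          coe_iterate_eq_pow_apply hSE]
    _ ≤ ‖A x‖₊ * (‖E ^ (2 * n)‖₊ * ‖(x : X)‖₊) :=
        ((A x).le_opNNNorm _).trans (by gcongr; exact (E ^ (2 * n)).le_opNNNorm _)
    _ = ‖A x‖₊ * ‖(x : X)‖₊ * ‖(E.comp E) ^ n‖₊ := by rw [hpow]; ring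

end DomainInvariant

theorem statement16_general
    {X : Type*} [NormedAddCommGroup X] [NormedSpace ℂ X] [CompleteSpace X]
    {HA : Type*} [NormedAddCommGroup HA] [InnerProductSpace ℂ HA]
    (A : X →ₗ.[ℂ] CDual X)
    (Φ : A.domain → HA)
    (hΦ : ∀ x y : A.domain, ⟪Φ y, Φ x⟫_ℂ = A x (y : X))
    (E : X →L[ℂ] X) (hinv : ∀ x : A.domain, E (x : X) ∈ A.domain)
    (hcomm : ∀ (x : A.domain) (y : X), A x (E y) = A ⟨E (x : X), hinv x⟩ y)
 :
    (∀ x y : A.domain, Φ x = Φ y →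
        Φ ⟨E (x : X), hinv x⟩ = Φ ⟨E (y : X), hinv y⟩) ∧
    (∀ x : A.domain, (‖Φ ⟨E (x : X), hinv x⟩‖₊ ^ 2 : ℝ≥0∞) ≤
        spectralRadius ℂ (E.comp E) * (‖Φ x‖₊ ^ 2 : ℝ≥0∞)) := by
  set S : A.domain → A.domain := fun u => ⟨E u, hinv u⟩
  have hSE : ∀ u, (S u : X) = E u := fun _ => rfl
  have hS := inner_map_symm_of_comm hΦ hSE hcomm
  refine ⟨fun x y => map_eq_map_of_inner_map_symm hS, fun x => ?_⟩
  have hbound : ∀ k : ℕ, (‖Φ (S x)‖₊ ^ 2) ^ 2 ^ k ≤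
      ‖A x‖₊ * ‖(x : X)‖₊ * ‖(E.comp E) ^ 2 ^ k‖₊ * (‖Φ x‖₊ ^ 2) ^ (2 ^ k - 1) :=
    fun k =>
    calc (‖Φ (S x)‖₊ ^ 2) ^ 2 ^ k = (‖Φ (S x)‖₊ ^ 2 ^ k) ^ 2 := by ring
      _ ≤ (‖Φ (S^[2 ^ k] x)‖₊ * ‖Φ x‖₊ ^ (2 ^ k - 1)) ^ 2 := by
        gcongr; exact nnnorm_map_pow_two_pow_le hS x k
      _ = ‖Φ (S^[2 ^ k] x)‖₊ ^ 2 * (‖Φ x‖₊ ^ 2) ^ (2 ^ k - 1) := by ring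
      _ ≤ _ := by gcongr; exact nnnorm_iterate_sq_le_nnnorm_pow hΦ hSE hcomm x _
  exact_mod_cast spectrum.coe_le_spectralRadius_mul_of_frequently_pow_le (E.comp E) <|
    frequently_atTop.2 fun k => ⟨2 ^ k, Nat.lt_two_pow_self.le, hbound k⟩

/-- A positive self-adjoint from X to X*; H_A the completion of
ran A with [Ax, Ay] := (Ax, y), encoded by Φ : dom A -> H_A with dense range and
inner (Φ y) (Φ x) = (A x)(y); E a bounded operator on X leaving dom A invariant
and satisfying E* A ⊆ A E (i.e. (A x)(E y) = (A (E x))(y)).  Then the map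
Ehat (Φ x) := Φ (E x) (representing Ax ↦ A (E x)) is well defined on ran A and
bounded, with [Ehat(Ax), Ehat(Ax)] ≤ r(E²) · [Ax, Ax] where r(E²) is the spectral
radius of E². -/
theorem statement16
    {X : Type*} [NormedAddCommGroup X] [NormedSpace ℂ X] [CompleteSpace X]
    {HA : Type*} [NormedAddCommGroup HA] [InnerProductSpace ℂ HA] [CompleteSpace HA]
    (A : X →ₗ.[ℂ] CDual X) (hsa : IsSelfAdjointOp A) (hpos : IsPositiveOp A)
    (Φ : A.domain → HA) (hΦdense : DenseRange Φ)
    (hΦ : ∀ x y : A.domain, ⟪Φ y, Φ x⟫_ℂ = A x (y : X))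
    (E : X →L[ℂ] X) (hinv : ∀ x : A.domain, E (x : X) ∈ A.domain)
    (hcomm : ∀ (x : A.domain) (y : X), A x (E y) = A ⟨E (x : X), hinv x⟩ y)
 :
    (∀ x y : A.domain, Φ x = Φ y →
        Φ ⟨E (x : X), hinv x⟩ = Φ ⟨E (y : X), hinv y⟩) ∧
    (∀ x : A.domain, (‖Φ ⟨E (x : X), hinv x⟩‖₊ ^ 2 : ℝ≥0∞) ≤
        spectralRadius ℂ (E.comp E) * (‖Φ x‖₊ ^ 2 : ℝ≥0∞)) :=
  statement16_general A Φ hΦ E hinv hcomm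
end
end

section
/- Under the hypotheses that E(dom A) ⊆ dom A and E* A ⊆ A E, the bounded extension Ê of the map Ax ↦ A(Ex) to H_A is self-adjoint on the Hilbert space H_A. -/
open scoped ComplexConjugate ComplexOrder InnerProductSpace ENNReal NNReal
noncomputable section

/-- Under the hypotheses E (dom A) ⊆ dom A and E* A ⊆ A E, the
bounded extension Ehat to H_A of the map Ax ↦ A (E x) (i.e. Ehat (Φ x) = Φ (E x)) is a
self-adjoint operator on the Hilbert space H_A. -/
theorem statement17
    {X : Type*} [NormedAddCommGroup X] [NormedSpace ℂ X] [CompleteSpace X]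
    {HA : Type*} [NormedAddCommGroup HA] [InnerProductSpace ℂ HA] [CompleteSpace HA]
    (A : X →ₗ.[ℂ] CDual X) (hsa : IsSelfAdjointOp A) (hpos : IsPositiveOp A)
    (Φ : A.domain → HA) (hΦdense : DenseRange Φ)
    (hΦ : ∀ x y : A.domain, ⟪Φ y, Φ x⟫_ℂ = A x (y : X))
    (E : X →L[ℂ] X) (hinv : ∀ x : A.domain, E (x : X) ∈ A.domain)
    (hcomm : ∀ (x : A.domain) (y : X), A x (E y) = A ⟨E (x : X), hinv x⟩ y)
    (Ehat : HA →L[ℂ] HA) (hEhat : ∀ x : A.domain, Ehat (Φ x) = Φ ⟨E (x : X), hinv x⟩) :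
    IsSelfAdjoint Ehat := by
  have key : ∀ x y : A.domain, ⟪Ehat (Φ x), Φ y⟫_ℂ = ⟪Φ x, Ehat (Φ y)⟫_ℂ := by
    intro x y
    rw [hEhat x, hEhat y, hΦ, hΦ]
    exact hcomm y (x : X)
  have h1 : ∀ x : A.domain, ∀ v : HA, ⟪Ehat (Φ x), v⟫_ℂ = ⟪Φ x, Ehat v⟫_ℂ := by
    intro x
    have := Continuous.ext_on hΦdense
      (continuous_const.inner continuous_id)
      (continuous_const.inner (Ehat.continuous))
      (fun v hv => by obtain ⟨y, rfl⟩ := hv; exact key x y)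
    exact fun v => congrFun this v
  have h2 : ∀ u v : HA, ⟪Ehat u, v⟫_ℂ = ⟪u, Ehat v⟫_ℂ := by
    intro u v
    have := Continuous.ext_on hΦdense
      (continuous_inner.comp ((Ehat.continuous.comp continuous_id).prodMk continuous_const))
      (continuous_inner.comp (continuous_id.prodMk continuous_const))
      (fun u hu => by obtain ⟨x, rfl⟩ := hu; exact h1 x v)
    exact congrFun this u
  rw [ContinuousLinearMap.isSelfAdjoint_iff_isSymmetric]
  exact fun u v => h2 u v
end
end

section
/- If A, B are positive self-adjoint operators from X to X* with positive lower bounds, and E is a bounded operator on X satisfying E* A ⊆ A E, E(dom A) ⊆ dom A, E* B ⊆ B E, E(dom B) ⊆ dom B, then E* (A ∔ B) ⊆ (A ∔ B) E, where A ∔ B is the form sum. -/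
open scoped ComplexConjugate ComplexOrder InnerProductSpace
noncomputable section

/-!
The relation `(Ax, Ey) = (AEx, y)` makes `E` symmetric for the inner product `(Ax, y)` of `H_A`,
so `n ↦ ‖Φ (Eⁿ x)‖` is log-convex; since `‖Φ (Eⁿ x)‖² = (Ax, E²ⁿ x) ≤ ‖Ax‖ ‖x‖ ‖E‖²ⁿ`, this
forces `‖Φ (E x)‖ ≤ ‖E‖ ‖Φ x‖`. Hence `E` extends to a bounded symmetric `T` on `H_A` with
`T S ⊆ S E`, so `E` preserves the form domain and is symmetric for the form
`t_A(x, y) = ⟪S y, S x⟫`. The same holds for `B`, hence for `t_A + t_B`, and as the form domain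
is dense, the form identity pins down `(A ∔ B) (E z)` as `E* ((A ∔ B) z)`.
-/

open Filter Topology

theorem le_of_pow_le_mul_pow {q s K : ℝ} (hs : 0 ≤ s) (h : ∀ n : ℕ, q ^ n ≤ K * s ^ n) :
    q ≤ s := by
  by_contra! hsq
  have hq : 0 < q := hs.trans_lt hsq
  have hlim : Tendsto (fun n : ℕ => K * (s / q) ^ n) atTop (𝓝 0) := by
    simpa using (tendsto_pow_atTop_nhds_zero_of_lt_one (div_nonneg hs hq.le)
      ((div_lt_one hq).2 hsq)).const_mul K
  have hge : ∀ n : ℕ, 1 ≤ K * (s / q) ^ n := fun n => by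
    rw [div_pow, mul_div_assoc', le_div_iff₀ (pow_pos hq n), one_mul]
    exact h n
  exact absurd (ge_of_tendsto' hlim hge) (by norm_num)

theorem apply_one_le_mul_apply_zero_of_logConvex {a : ℕ → ℝ} {r C : ℝ} (hr : 0 ≤ r)
    (ha : ∀ n, 0 ≤ a n) (hconv : ∀ n, a (n + 1) ^ 2 ≤ a n * a (n + 2))
    (hgrowth : ∀ n, a n ≤ C * r ^ n) : a 1 ≤ r * a 0 := by
  have hratio : ∀ n, a 1 * a n ≤ a 0 * a (n + 1) := by
    intro n
    induction n with
    | zero => exact (mul_comm _ _).le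
    | succ n ih =>
      rcases (ha (n + 1)).eq_or_lt with hzero | hpos
      · rw [← hzero, mul_zero]
        exact mul_nonneg (ha 0) (ha _)
      · refine le_of_mul_le_mul_left ?_ hpos
        calc a (n + 1) * (a 1 * a (n + 1)) = a 1 * a (n + 1) ^ 2 := by ring
          _ ≤ a 1 * (a n * a (n + 2)) := mul_le_mul_of_nonneg_left (hconv n) (ha 1)
          _ = a 1 * a n * a (n + 2) := by ring
          _ ≤ a 0 * a (n + 1) * a (n + 2) := mul_le_mul_of_nonneg_right ih (ha _)
          _ = a (n + 1) * (a 0 * a (n + 2)) := by ring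
  have hgeom : ∀ n, a 1 ^ n * a 0 ≤ a n * a 0 ^ n := by
    intro n
    induction n with
    | zero => simp
    | succ n ih =>
      calc a 1 ^ (n + 1) * a 0 = a 1 * (a 1 ^ n * a 0) := by ring
        _ ≤ a 1 * (a n * a 0 ^ n) := mul_le_mul_of_nonneg_left ih (ha 1)
        _ = a 1 * a n * a 0 ^ n := by ring
        _ ≤ a 0 * a (n + 1) * a 0 ^ n :=
          mul_le_mul_of_nonneg_right (hratio n) (pow_nonneg (ha 0) n)
        _ = a (n + 1) * a 0 ^ (n + 1) := by ring
  rcases (ha 0).eq_or_lt with hzero | hpos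
  · have h1 := hconv 0
    rw [← hzero, zero_mul] at h1
    rw [← hzero, mul_zero]
    nlinarith [ha 1]
  · refine le_of_pow_le_mul_pow (K := C / a 0) (mul_nonneg hr hpos.le) fun n => ?_
    rw [div_mul_eq_mul_div, le_div_iff₀ hpos]
    calc a 1 ^ n * a 0 ≤ a n * a 0 ^ n := hgeom n
      _ ≤ C * r ^ n * a 0 ^ n := mul_le_mul_of_nonneg_right (hgrowth n) (pow_nonneg hpos.le n)
      _ = C * (r * a 0) ^ n := by ring

theorem norm_apply_map_le_of_inner_map_symm {𝕜 D H : Type*} [RCLike 𝕜]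
    [SeminormedAddCommGroup H] [InnerProductSpace 𝕜 H] (Φ : D → H) (e : D → D)
    (he : ∀ x y, ⟪Φ (e x), Φ y⟫_𝕜 = ⟪Φ x, Φ (e y)⟫_𝕜) {r C : ℝ} (hr : 0 ≤ r) {x : D}
    (hgrowth : ∀ n, ‖Φ (e^[n] x)‖ ≤ C * r ^ n) : ‖Φ (e x)‖ ≤ r * ‖Φ x‖ := by
  refine apply_one_le_mul_apply_zero_of_logConvex (a := fun n => ‖Φ (e^[n] x)‖) hr
    (fun n => norm_nonneg _) (fun n => ?_) hgrowth
  have hshift : ⟪Φ (e^[n + 1] x), Φ (e^[n + 1] x)⟫_𝕜 = ⟪Φ (e^[n] x), Φ (e^[n + 2] x)⟫_𝕜 := by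
    rw [Function.iterate_succ_apply', he]
    simp only [Function.iterate_succ_apply']
  calc ‖Φ (e^[n + 1] x)‖ ^ 2 = ‖⟪Φ (e^[n + 1] x), Φ (e^[n + 1] x)⟫_𝕜‖ := by
        rw [inner_self_eq_norm_sq_to_K]; simp
    _ ≤ ‖Φ (e^[n] x)‖ * ‖Φ (e^[n + 2] x)‖ := hshift ▸ norm_inner_le_norm _ _

theorem isLinearMap_of_denseRange_of_inner {𝕜 M H : Type*} [RCLike 𝕜] [AddCommGroup M]
    [Module 𝕜 M] [NormedAddCommGroup H] [InnerProductSpace 𝕜 H] {Φ : M → H}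
    (hΦ : DenseRange Φ) (L : M → M →ₗ⋆[𝕜] 𝕜) (hL : ∀ x y, ⟪Φ y, Φ x⟫_𝕜 = L x y) :
    IsLinearMap 𝕜 Φ where
  map_add u v := hΦ.eq_of_inner_left 𝕜 fun x => by
    rw [inner_add_left, hL, hL, hL, map_add]
  map_smul c u := hΦ.eq_of_inner_left 𝕜 fun x => by
    rw [inner_smul_left, hL, hL, map_smulₛₗ, smul_eq_mul]

/-- `H` plays the role of `H_A`, `Φ x` is the class of `x ∈ dom A` and `S = J*`, so that
`A = J S` on `dom A`. -/
structure IsFormFactorization {X H : Type*} [NormedAddCommGroup X] [NormedSpace ℂ X]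
    [NormedAddCommGroup H] [InnerProductSpace ℂ H] (A : X →ₗ.[ℂ] CDual X) (Φ : A.domain → H)
    (J : H →ₗ.[ℂ] CDual X) (S : X →ₗ.[ℂ] H) : Prop where
  denseRange : DenseRange Φ
  inner_apply : ∀ x y : A.domain, ⟪Φ y, Φ x⟫_ℂ = A x (y : X)
  mem_domain_iff : ∀ h : H, h ∈ J.domain ↔ h ∈ Set.range Φ
  apply_eq : ∀ (x : A.domain) (hh : Φ x ∈ J.domain), J ⟨Φ x, hh⟩ = A x
  mem_adjoint_domain_iff : ∀ y : X, y ∈ S.domain ↔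
    ∃ k : H, ∀ h : J.domain, J h y = ⟪k, (h : H)⟫_ℂ
  adjoint_apply : ∀ (y : S.domain) (h : J.domain), J h (y : X) = ⟪S y, (h : H)⟫_ℂ

namespace IsFormFactorization

variable {X H : Type*} [NormedAddCommGroup X] [NormedSpace ℂ X]
  [NormedAddCommGroup H] [InnerProductSpace ℂ H] {A : X →ₗ.[ℂ] CDual X} {Φ : A.domain → H}
  {J : H →ₗ.[ℂ] CDual X} {S : X →ₗ.[ℂ] H} {E : X →L[ℂ] X}

theorem isLinearMap (hF : IsFormFactorization A Φ J S) : IsLinearMap ℂ Φ :=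
  isLinearMap_of_denseRange_of_inner hF.denseRange
    (fun x => (A x : X →ₗ⋆[ℂ] ℂ).domRestrict A.domain) hF.inner_apply

theorem inner_map_left (hF : IsFormFactorization A Φ J S)
    (hinv : ∀ x : A.domain, E (x : X) ∈ A.domain)
    (hcomm : ∀ (x : A.domain) (y : X), A x (E y) = A ⟨E (x : X), hinv x⟩ y) (x y : A.domain) :
    ⟪Φ ⟨E x, hinv x⟩, Φ y⟫_ℂ = ⟪Φ x, Φ ⟨E y, hinv y⟩⟫_ℂ := by
  rw [hF.inner_apply, hF.inner_apply]
  exact hcomm y x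

theorem norm_apply_map_le (hF : IsFormFactorization A Φ J S)
    (hinv : ∀ x : A.domain, E (x : X) ∈ A.domain)
    (hcomm : ∀ (x : A.domain) (y : X), A x (E y) = A ⟨E (x : X), hinv x⟩ y) (x : A.domain) :
    ‖Φ ⟨E x, hinv x⟩‖ ≤ ‖E‖ * ‖Φ x‖ := by
  set e : A.domain → A.domain := fun x => ⟨E x, hinv x⟩
  have hcoe : Function.Semiconj Subtype.val e E := fun _ => rfl
  have hshift : ∀ n (x : A.domain) (y : X), A (e^[n] x) y = A x (E^[n] y) := by
    intro n
    induction n with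
    | zero => simp
    | succ n ih =>
      intro x y
      rw [Function.iterate_succ_apply, ih, Function.iterate_succ_apply', hcomm]
  set K := ‖A x‖ * ‖(x : X)‖
  refine norm_apply_map_le_of_inner_map_symm (C := √K) Φ e (hF.inner_map_left hinv hcomm)
    (norm_nonneg E) fun n => ?_
  have hsq : ‖Φ (e^[n] x)‖ ^ 2 ≤ K * (‖E‖ ^ n) ^ 2 :=
    calc ‖Φ (e^[n] x)‖ ^ 2 = ‖A (e^[n] x) (e^[n] x : X)‖ := by
          rw [← hF.inner_apply, inner_self_eq_norm_sq_to_K]; simp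
      _ = ‖A x (E^[n + n] x)‖ := by
          rw [hshift, hcoe.iterate_right n x, Function.iterate_add_apply]
      _ ≤ ‖A x‖ * (‖E‖ ^ (n + n) * ‖(x : X)‖) := by
          refine (A x).le_opNorm _ |>.trans (mul_le_mul_of_nonneg_left ?_ (norm_nonneg _))
          simpa using (E.lipschitz.iterate (n + n)).norm_le_mul
            (Function.iterate_fixed (map_zero E) _) (x : X)
      _ = K * (‖E‖ ^ n) ^ 2 := by ring
  calc ‖Φ (e^[n] x)‖ ≤ √(K * (‖E‖ ^ n) ^ 2) := Real.le_sqrt_of_sq_le hsq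
    _ = √K * ‖E‖ ^ n := by rw [Real.sqrt_mul (by positivity), Real.sqrt_sq (by positivity)]

theorem exists_isSymmetric_apply_eq [CompleteSpace H] (hF : IsFormFactorization A Φ J S)
    (hinv : ∀ x : A.domain, E (x : X) ∈ A.domain)
    (hcomm : ∀ (x : A.domain) (y : X), A x (E y) = A ⟨E (x : X), hinv x⟩ y) :
    ∃ T : H →L[ℂ] H, (T : H →ₗ[ℂ] H).IsSymmetric ∧ ∀ x : A.domain, T (Φ x) = Φ ⟨E x, hinv x⟩ := by
  let φ : A.domain →ₗ[ℂ] H := hF.isLinearMap.mk' Φ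
  let Ed : A.domain →ₗ[ℂ] A.domain := (E : X →ₗ[ℂ] X).restrict fun x hx => hinv ⟨x, hx⟩
  let T : H →L[ℂ] H := (φ ∘ₗ Ed).extendOfNorm φ
  have hT : ∀ x, T (Φ x) = Φ ⟨E x, hinv x⟩ :=
    LinearMap.extendOfNorm_eq hF.denseRange ⟨‖E‖, hF.norm_apply_map_le hinv hcomm⟩
  refine ⟨T, fun u v => ?_, hT⟩
  refine hF.denseRange.induction_on₂ (p := fun u v => ⟪T u, v⟫_ℂ = ⟪u, T v⟫_ℂ)
    (isClosed_eq (by fun_prop) (by fun_prop)) (fun x y => ?_) u v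
  rw [hT, hT]
  exact hF.inner_map_left hinv hcomm x y

theorem exists_adjoint_apply_map_eq (hF : IsFormFactorization A Φ J S)
    (hinv : ∀ x : A.domain, E (x : X) ∈ A.domain)
    (hcomm : ∀ (x : A.domain) (y : X), A x (E y) = A ⟨E (x : X), hinv x⟩ y) {T : H →L[ℂ] H}
    (hT : (T : H →ₗ[ℂ] H).IsSymmetric) (hTΦ : ∀ x : A.domain, T (Φ x) = Φ ⟨E x, hinv x⟩)
    (y : S.domain) : ∃ hy : E y ∈ S.domain, S ⟨E y, hy⟩ = T (S y) := by
  have hJ : ∀ h : J.domain, J h (E y) = ⟪T (S y), (h : H)⟫_ℂ := by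
    rintro ⟨_, hh⟩
    obtain ⟨x, rfl⟩ := (hF.mem_domain_iff _).1 hh
    have hEx : Φ ⟨E x, hinv x⟩ ∈ J.domain := (hF.mem_domain_iff _).2 ⟨_, rfl⟩
    calc J ⟨Φ x, hh⟩ (E y) = A ⟨E x, hinv x⟩ y := by rw [hF.apply_eq, hcomm]
      _ = ⟪S y, Φ ⟨E x, hinv x⟩⟫_ℂ := by rw [← hF.apply_eq _ hEx, hF.adjoint_apply]
      _ = ⟪T (S y), Φ x⟫_ℂ := by rw [← hTΦ]; exact (hT _ _).symm
  have hEy : E y ∈ S.domain := (hF.mem_adjoint_domain_iff _).2 ⟨_, hJ⟩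
  refine ⟨hEy, hF.denseRange.eq_of_inner_left ℂ fun x => ?_⟩
  have hx : Φ x ∈ J.domain := (hF.mem_domain_iff _).2 ⟨x, rfl⟩
  rw [← hF.adjoint_apply ⟨E y, hEy⟩ ⟨Φ x, hx⟩, hJ ⟨Φ x, hx⟩]

theorem map_mem_adjoint_domain [CompleteSpace H] (hF : IsFormFactorization A Φ J S)
    (hinv : ∀ x : A.domain, E (x : X) ∈ A.domain)
    (hcomm : ∀ (x : A.domain) (y : X), A x (E y) = A ⟨E (x : X), hinv x⟩ y) {y : X}
    (hy : y ∈ S.domain) : E y ∈ S.domain :=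
  have ⟨_, hT, hTΦ⟩ := hF.exists_isSymmetric_apply_eq hinv hcomm
  (hF.exists_adjoint_apply_map_eq hinv hcomm hT hTΦ ⟨y, hy⟩).1

theorem inner_adjoint_map_left [CompleteSpace H] (hF : IsFormFactorization A Φ J S)
    (hinv : ∀ x : A.domain, E (x : X) ∈ A.domain)
    (hcomm : ∀ (x : A.domain) (y : X), A x (E y) = A ⟨E (x : X), hinv x⟩ y) (y z : S.domain)
    (hEy : E y ∈ S.domain) (hEz : E z ∈ S.domain) :
    ⟪S ⟨E y, hEy⟩, S z⟫_ℂ = ⟪S y, S ⟨E z, hEz⟩⟫_ℂ := by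
  obtain ⟨T, hT, hTΦ⟩ := hF.exists_isSymmetric_apply_eq hinv hcomm
  rw [(hF.exists_adjoint_apply_map_eq hinv hcomm hT hTΦ y).2,
    (hF.exists_adjoint_apply_map_eq hinv hcomm hT hTΦ z).2]
  exact hT _ _

end IsFormFactorization

theorem statement18_general
    {X : Type*} [NormedAddCommGroup X] [NormedSpace ℂ X]
    {HA : Type*} [NormedAddCommGroup HA] [InnerProductSpace ℂ HA] [CompleteSpace HA]
    {HB : Type*} [NormedAddCommGroup HB] [InnerProductSpace ℂ HB] [CompleteSpace HB]
    (A : X →ₗ.[ℂ] CDual X)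
    (B : X →ₗ.[ℂ] CDual X)
    (ΦA : A.domain → HA) (hΦAdense : DenseRange ΦA)
    (hΦA : ∀ x y : A.domain, ⟪ΦA y, ΦA x⟫_ℂ = A x (y : X))
    (JA : HA →ₗ.[ℂ] CDual X)
    (hJAdom : ∀ h : HA, h ∈ JA.domain ↔ h ∈ Set.range ΦA)
    (hJAval : ∀ (x : A.domain) (hh : ΦA x ∈ JA.domain), JA ⟨ΦA x, hh⟩ = A x)
    (SA : X →ₗ.[ℂ] HA)
    (hSAdom : ∀ y : X, y ∈ SA.domain ↔
      ∃ k : HA, ∀ h : JA.domain, JA h y = ⟪k, (h : HA)⟫_ℂ)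
    (hSAval : ∀ (y : SA.domain) (h : JA.domain), JA h (y : X) = ⟪SA y, (h : HA)⟫_ℂ)
    (ΦB : B.domain → HB) (hΦBdense : DenseRange ΦB)
    (hΦB : ∀ x y : B.domain, ⟪ΦB y, ΦB x⟫_ℂ = B x (y : X))
    (JB : HB →ₗ.[ℂ] CDual X)
    (hJBdom : ∀ h : HB, h ∈ JB.domain ↔ h ∈ Set.range ΦB)
    (hJBval : ∀ (x : B.domain) (hh : ΦB x ∈ JB.domain), JB ⟨ΦB x, hh⟩ = B x)
    (SB : X →ₗ.[ℂ] HB)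
    (hSBdom : ∀ y : X, y ∈ SB.domain ↔
      ∃ k : HB, ∀ h : JB.domain, JB h y = ⟪k, (h : HB)⟫_ℂ)
    (hSBval : ∀ (y : SB.domain) (h : JB.domain), JB h (y : X) = ⟪SB y, (h : HB)⟫_ℂ)
    (hdense : Dense ((SA.domain : Set X) ∩ (SB.domain : Set X)))
    (C : X →ₗ.[ℂ] CDual X)
    (hCdom : ∀ x : X, x ∈ C.domain ↔
      ∃ (hxA : x ∈ SA.domain) (hxB : x ∈ SB.domain) (z : CDual X),
        ∀ (y : X) (hyA : y ∈ SA.domain) (hyB : y ∈ SB.domain),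
          z y = ⟪SA ⟨y, hyA⟩, SA ⟨x, hxA⟩⟫_ℂ + ⟪SB ⟨y, hyB⟩, SB ⟨x, hxB⟩⟫_ℂ)
    (hCval : ∀ (x : C.domain) (hxA : (x : X) ∈ SA.domain) (hxB : (x : X) ∈ SB.domain)
      (y : X) (hyA : y ∈ SA.domain) (hyB : y ∈ SB.domain),
        C x y = ⟪SA ⟨y, hyA⟩, SA ⟨(x : X), hxA⟩⟫_ℂ + ⟪SB ⟨y, hyB⟩, SB ⟨(x : X), hxB⟩⟫_ℂ)
    (E : X →L[ℂ] X)
    (hinvA : ∀ x : A.domain, E (x : X) ∈ A.domain)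
    (hcommA : ∀ (x : A.domain) (y : X), A x (E y) = A ⟨E (x : X), hinvA x⟩ y)
    (hinvB : ∀ x : B.domain, E (x : X) ∈ B.domain)
    (hcommB : ∀ (x : B.domain) (y : X), B x (E y) = B ⟨E (x : X), hinvB x⟩ y) :
    ∀ z : C.domain, ∃ hz : E (z : X) ∈ C.domain,
      ∀ y : X, C z (E y) = C ⟨E (z : X), hz⟩ y := by
  have hFA : IsFormFactorization A ΦA JA SA := ⟨hΦAdense, hΦA, hJAdom, hJAval, hSAdom, hSAval⟩
  have hFB : IsFormFactorization B ΦB JB SB := ⟨hΦBdense, hΦB, hJBdom, hJBval, hSBdom, hSBval⟩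
  have hEA := fun y (hy : y ∈ SA.domain) => hFA.map_mem_adjoint_domain hinvA hcommA hy
  have hEB := fun y (hy : y ∈ SB.domain) => hFB.map_mem_adjoint_domain hinvB hcommB hy
  intro z
  obtain ⟨hzA, hzB, -⟩ := (hCdom z).1 z.2
  have hCE : ∀ (y : X) (hyA : y ∈ SA.domain) (hyB : y ∈ SB.domain), C z (E y) =
      ⟪SA ⟨y, hyA⟩, SA ⟨E z, hEA z hzA⟩⟫_ℂ + ⟪SB ⟨y, hyB⟩, SB ⟨E z, hEB z hzB⟩⟫_ℂ := by
    intro y hyA hyB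
    rw [hCval z hzA hzB (E y) (hEA y hyA) (hEB y hyB),
      hFA.inner_adjoint_map_left hinvA hcommA ⟨y, hyA⟩ ⟨z, hzA⟩,
      hFB.inner_adjoint_map_left hinvB hcommB ⟨y, hyB⟩ ⟨z, hzB⟩]
  have hz : E z ∈ C.domain := (hCdom _).2 ⟨hEA z hzA, hEB z hzB, (C z).comp E, hCE⟩
  refine ⟨hz, fun y => congrFun (((C z).continuous.comp E.continuous).ext_on hdense
    (C ⟨E z, hz⟩).continuous ?_) y⟩
  rintro v ⟨hvA, hvB⟩
  exact (hCE v hvA hvB).trans (hCval ⟨E z, hz⟩ _ _ v hvA hvB).symm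

/-- A, B positive self-adjoint operators from X to X* with positive
lower bounds; C = A ∔ B their form sum (the self-adjoint operator associated to the
closed form t_A + t_B on dom J_A* ∩ dom J_B*); E a bounded operator on X with
E* A ⊆ A E, E (dom A) ⊆ dom A, E* B ⊆ B E, E (dom B) ⊆ dom B.  Then
E* (A ∔ B) ⊆ (A ∔ B) E: for every z ∈ dom (A ∔ B) one has E z ∈ dom (A ∔ B) and
E* ((A ∔ B) z) = (A ∔ B) (E z). -/
theorem statement18
    {X : Type*} [NormedAddCommGroup X] [NormedSpace ℂ X] [CompleteSpace X]
    {HA : Type*} [NormedAddCommGroup HA] [InnerProductSpace ℂ HA] [CompleteSpace HA]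
    {HB : Type*} [NormedAddCommGroup HB] [InnerProductSpace ℂ HB] [CompleteSpace HB]
    (A : X →ₗ.[ℂ] CDual X) (hsaA : IsSelfAdjointOp A)
    (B : X →ₗ.[ℂ] CDual X) (hsaB : IsSelfAdjointOp B)
    (γA γB : ℝ) (hγA : 0 < γA) (hγB : 0 < γB)
    (hlbA : ∀ x : A.domain, (↑(γA * ‖(x : X)‖ ^ 2) : ℂ) ≤ A x (x : X))
    (hlbB : ∀ x : B.domain, (↑(γB * ‖(x : X)‖ ^ 2) : ℂ) ≤ B x (x : X))
    (ΦA : A.domain → HA) (hΦAdense : DenseRange ΦA)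
    (hΦA : ∀ x y : A.domain, ⟪ΦA y, ΦA x⟫_ℂ = A x (y : X))
    (JA : HA →ₗ.[ℂ] CDual X)
    (hJAdom : ∀ h : HA, h ∈ JA.domain ↔ h ∈ Set.range ΦA)
    (hJAval : ∀ (x : A.domain) (hh : ΦA x ∈ JA.domain), JA ⟨ΦA x, hh⟩ = A x)
    (SA : X →ₗ.[ℂ] HA)
    (hSAdom : ∀ y : X, y ∈ SA.domain ↔
      ∃ k : HA, ∀ h : JA.domain, JA h y = ⟪k, (h : HA)⟫_ℂ)
    (hSAval : ∀ (y : SA.domain) (h : JA.domain), JA h (y : X) = ⟪SA y, (h : HA)⟫_ℂ)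
    (ΦB : B.domain → HB) (hΦBdense : DenseRange ΦB)
    (hΦB : ∀ x y : B.domain, ⟪ΦB y, ΦB x⟫_ℂ = B x (y : X))
    (JB : HB →ₗ.[ℂ] CDual X)
    (hJBdom : ∀ h : HB, h ∈ JB.domain ↔ h ∈ Set.range ΦB)
    (hJBval : ∀ (x : B.domain) (hh : ΦB x ∈ JB.domain), JB ⟨ΦB x, hh⟩ = B x)
    (SB : X →ₗ.[ℂ] HB)
    (hSBdom : ∀ y : X, y ∈ SB.domain ↔
      ∃ k : HB, ∀ h : JB.domain, JB h y = ⟪k, (h : HB)⟫_ℂ)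
    (hSBval : ∀ (y : SB.domain) (h : JB.domain), JB h (y : X) = ⟪SB y, (h : HB)⟫_ℂ)
    (hdense : Dense ((SA.domain : Set X) ∩ (SB.domain : Set X)))
    (C : X →ₗ.[ℂ] CDual X)
    (hCdom : ∀ x : X, x ∈ C.domain ↔
      ∃ (hxA : x ∈ SA.domain) (hxB : x ∈ SB.domain) (z : CDual X),
        ∀ (y : X) (hyA : y ∈ SA.domain) (hyB : y ∈ SB.domain),
          z y = ⟪SA ⟨y, hyA⟩, SA ⟨x, hxA⟩⟫_ℂ + ⟪SB ⟨y, hyB⟩, SB ⟨x, hxB⟩⟫_ℂ)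
    (hCval : ∀ (x : C.domain) (hxA : (x : X) ∈ SA.domain) (hxB : (x : X) ∈ SB.domain)
      (y : X) (hyA : y ∈ SA.domain) (hyB : y ∈ SB.domain),
        C x y = ⟪SA ⟨y, hyA⟩, SA ⟨(x : X), hxA⟩⟫_ℂ + ⟪SB ⟨y, hyB⟩, SB ⟨(x : X), hxB⟩⟫_ℂ)
    (E : X →L[ℂ] X)
    (hinvA : ∀ x : A.domain, E (x : X) ∈ A.domain)
    (hcommA : ∀ (x : A.domain) (y : X), A x (E y) = A ⟨E (x : X), hinvA x⟩ y)
    (hinvB : ∀ x : B.domain, E (x : X) ∈ B.domain)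
    (hcommB : ∀ (x : B.domain) (y : X), B x (E y) = B ⟨E (x : X), hinvB x⟩ y) :
    ∀ z : C.domain, ∃ hz : E (z : X) ∈ C.domain,
      ∀ y : X, C z (E y) = C ⟨E (z : X), hz⟩ y :=
  statement18_general A B ΦA hΦAdense hΦA JA hJAdom hJAval SA hSAdom hSAval ΦB hΦBdense hΦB JB
    hJBdom hJBval SB hSBdom hSBval hdense C hCdom hCval E hinvA hcommA hinvB hcommB
end
end
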